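/- arXiv:2108.13884 — 9 statements merged into one kernel-verified Lean document; each statement's English description precedes it below -/
import Mathlib

section
/- If G and G' are simple graphs each with n vertices and m ≥ 1 edges, and the degree sequence of G (sorted in non-increasing order) majorizes the degree sequence of G', then I_d(G) ≤ I_d(G'), with equality if and only if the degree sequences of G and G' are equal. -/
open Finset

/-- Degree-based entropy: `I_d(G) = log₂(2m) - (1/(2m)) ∑_v d(v) log₂ d(v)`. -/
noncomputable def degEntropy {V : Type} [Fintype V] (G : SimpleGraph V) : ℝ :=
  Real.logb 2 (2 * (G.edgeSet.ncard : ℝ)) -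
    (1 / (2 * (G.edgeSet.ncard : ℝ))) *
      ∑ v : V, ((G.neighborSet v).ncard : ℝ) * Real.logb 2 ((G.neighborSet v).ncard)

/-- The degree sequence of `G`, sorted in non-increasing order. -/
noncomputable def degSeq {n : ℕ} (G : SimpleGraph (Fin n)) : List ℕ :=
  ((Finset.univ.val.map fun v => (G.neighborSet v).ncard).sort (· ≤ ·)).reverse

/-- `A` majorizes `B`. -/
def Majorizes (A B : List ℕ) : Prop :=
  (∀ s : ℕ, (B.take s).sum ≤ (A.take s).sum) ∧ A.sum = B.sum

/-!
Up to the common term `log₂ (2m)` and the positive factor `1 / (2m log 2)`, the entropy is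
`-∑ φ(dᵢ)` with `φ(x) = x log x` convex, so the claim is Karamata's inequality for `φ`.
If `A` majorizes the non-increasing `B` and `c(b)` is a subgradient of `φ` at `b`, then
`φ(aᵢ) - φ(bᵢ) ≥ c(bᵢ) (aᵢ - bᵢ)`, and `∑ c(bᵢ) (aᵢ - bᵢ) ≥ 0` by Abel summation, because
`c(bᵢ)` is non-increasing while the partial sums of `aᵢ - bᵢ` are non-negative and end at `0`.
If `A ≠ B`, equal totals force `aₖ < bₖ` for some `k`; then `bₖ ≥ 1`, where `φ` is strictly
convex and the tangent inequality at `k` is strict.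
-/

theorem Finset.sum_range_mul_nonneg_of_antitoneOn {R : Type*} [CommRing R] [LinearOrder R]
    [IsOrderedRing R] {n : ℕ} {f d : ℕ → R} (hf : AntitoneOn f (Set.Iio n))
    (hd : ∀ s < n, 0 ≤ ∑ i ∈ range s, d i) (hd₀ : ∑ i ∈ range n, d i = 0) :
    0 ≤ ∑ i ∈ range n, f i * d i := by
  have by_parts := sum_range_by_parts f d n
  simp only [smul_eq_mul] at by_parts
  rw [by_parts, hd₀, mul_zero, zero_sub, neg_nonneg]
  refine sum_nonpos fun i hi => mul_nonpos_of_nonpos_of_nonneg ?_ (hd _ ?_)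
  · have := mem_range.1 hi
    exact sub_nonpos.2 (hf (by simp; omega) (by simp; omega) (by omega))
  · have := mem_range.1 hi; omega

theorem Real.log_add_one_mul_sub_lt_mul_log_sub_mul_log {x y : ℝ} (hx : 0 ≤ x) (hy : 0 < y)
    (hxy : x ≠ y) : (log y + 1) * (x - y) < x * log x - y * log y := by
  have h := mul_lt_mul_of_pos_left (self_sub_one_lt_mul_log (div_nonneg hx hy.le)
    (by rwa [Ne, div_eq_one_iff_eq hy.ne'])) hy
  have hlog_div : x * log (x / y) = x * log x - x * log y := by
    rcases hx.eq_or_lt with rfl | hx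
    · simp
    · rw [log_div hx.ne' hy.ne']; ring
  field_simp at h
  linarith

/-- At `0`, where `x log x` has derivative `-∞`, the value `0` is still a subgradient on `ℕ`,
since `k log k ≥ 0` for every `k : ℕ`. -/
noncomputable def mulLogSubgrad (k : ℕ) : ℝ := if k = 0 then 0 else Real.log k + 1

theorem monotone_mulLogSubgrad : Monotone mulLogSubgrad := by
  intro a b hab
  rcases eq_or_ne a 0 with rfl | ha
  · rw [mulLogSubgrad, if_pos rfl, mulLogSubgrad]
    split_ifs
    exacts [le_rfl, by linarith [Real.log_natCast_nonneg b]]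
  · have hb : b ≠ 0 := by omega
    simp only [mulLogSubgrad, ha, hb, if_false]
    gcongr

theorem mulLogSubgrad_mul_sub_lt {a b : ℕ} (hab : a ≠ b) (hb : b ≠ 0) :
    mulLogSubgrad b * (a - b) < a * Real.log a - b * Real.log b := by
  rw [mulLogSubgrad, if_neg hb]
  exact Real.log_add_one_mul_sub_lt_mul_log_sub_mul_log a.cast_nonneg
    (Nat.cast_pos.2 (Nat.pos_of_ne_zero hb)) (Nat.cast_injective.ne hab)

theorem mulLogSubgrad_mul_sub_le (a b : ℕ) :
    mulLogSubgrad b * (a - b) ≤ a * Real.log a - b * Real.log b := by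
  rcases eq_or_ne a b with rfl | hab
  · simp
  rcases eq_or_ne b 0 with rfl | hb
  · simpa [mulLogSubgrad] using mul_nonneg a.cast_nonneg (Real.log_natCast_nonneg a)
  · exact (mulLogSubgrad_mul_sub_lt hab hb).le

namespace List

theorem getD_antitoneOn {α : Type*} [Preorder α] {L : List α} (hL : L.SortedGE) (d : α) :
    AntitoneOn (L.getD · d) (Set.Iio L.length) := fun i hi j hj hij => by
  simp only [getD_eq_getElem _ _ hi, getD_eq_getElem _ _ hj]
  exact sortedGE_iff_getElem_ge_getElem_of_le.1 hL hij

variable {M : Type*} [AddCommMonoid M]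

theorem sum_take_eq_sum_range_getD (L : List M) (s : ℕ) :
    (L.take s).sum = ∑ i ∈ Finset.range s, L.getD i 0 := by
  induction s with
  | zero => simp
  | succ s ih =>
    rw [Finset.sum_range_succ, ← ih]
    rcases lt_or_ge s L.length with hs | hs
    · rw [sum_take_succ L s hs, getD_eq_getElem _ _ hs]
    · rw [getD_eq_default _ _ hs, take_of_length_le hs, take_of_length_le (by omega), add_zero]

theorem sum_eq_sum_range_getD (L : List M) :
    L.sum = ∑ i ∈ Finset.range L.length, L.getD i 0 := by
  rw [← sum_take_eq_sum_range_getD, take_length]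

theorem sum_map_eq_sum_range_getD {α : Type*} (L : List α) (φ : α → M) (d : α) :
    (L.map φ).sum = ∑ i ∈ Finset.range L.length, φ (L.getD i d) := by
  rw [sum_eq_sum_range_getD, length_map]
  refine Finset.sum_congr rfl fun i hi => ?_
  have hi : i < L.length := Finset.mem_range.1 hi
  rw [getD_eq_getElem _ _ (by simpa), getElem_map, getD_eq_getElem _ _ hi]

theorem exists_getD_lt_getD_of_sum_eq_sum [LinearOrder M] [IsOrderedCancelAddMonoid M]
    {A B : List M} (hlen : A.length = B.length) (hsum : A.sum = B.sum) (hne : A ≠ B) :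
    ∃ i < B.length, A.getD i 0 < B.getD i 0 := by
  by_contra! hle
  rw [sum_eq_sum_range_getD, sum_eq_sum_range_getD, hlen] at hsum
  have heq := (Finset.sum_eq_sum_iff_of_le fun i hi => hle i (Finset.mem_range.1 hi)).1 hsum.symm
  refine hne (ext_getElem hlen fun i hA hB => ?_)
  have hi := heq i (Finset.mem_range.2 hB)
  rwa [getD_eq_getElem _ _ hA, getD_eq_getElem _ _ hB, eq_comm] at hi

end List

namespace Majorizes

variable {A B : List ℕ} {c φ : ℕ → ℝ}

theorem sum_subgrad_mul_sub_nonneg (h : Majorizes A B) (hlen : A.length = B.length)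
    (hB : B.SortedGE) (hc : Monotone c) :
    0 ≤ ∑ i ∈ range B.length, c (B.getD i 0) * ((A.getD i 0 : ℝ) - B.getD i 0) := by
  have partial_sum (s : ℕ) : ∑ i ∈ range s, ((A.getD i 0 : ℝ) - B.getD i 0) =
      ((A.take s).sum : ℝ) - (B.take s).sum := by
    simp only [sum_sub_distrib, List.sum_take_eq_sum_range_getD, Nat.cast_sum]
  refine sum_range_mul_nonneg_of_antitoneOn (hc.comp_antitoneOn (B.getD_antitoneOn hB 0))
    (fun s _ => ?_) ?_
  · rw [partial_sum, sub_nonneg]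
    exact_mod_cast h.1 s
  · rw [partial_sum, ← hlen, List.take_length, hlen, List.take_length, h.2, sub_self]

theorem sum_map_le (h : Majorizes A B) (hlen : A.length = B.length) (hB : B.SortedGE)
    (hc : Monotone c) (hφ : ∀ a b : ℕ, c b * ((a : ℝ) - b) ≤ φ a - φ b) :
    (B.map φ).sum ≤ (A.map φ).sum := by
  rw [List.sum_map_eq_sum_range_getD _ _ 0, List.sum_map_eq_sum_range_getD _ _ 0, hlen,
    ← sub_nonneg, ← sum_sub_distrib]
  exact (h.sum_subgrad_mul_sub_nonneg hlen hB hc).trans (sum_le_sum fun i _ => hφ _ _)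

theorem sum_map_lt (h : Majorizes A B) (hlen : A.length = B.length) (hB : B.SortedGE)
    (hc : Monotone c) (hφ : ∀ a b : ℕ, c b * ((a : ℝ) - b) ≤ φ a - φ b)
    (hφ_strict : ∀ a b : ℕ, a < b → c b * ((a : ℝ) - b) < φ a - φ b) (hne : A ≠ B) :
    (B.map φ).sum < (A.map φ).sum := by
  obtain ⟨k, hk, hlt⟩ := List.exists_getD_lt_getD_of_sum_eq_sum hlen h.2 hne
  rw [List.sum_map_eq_sum_range_getD _ _ 0, List.sum_map_eq_sum_range_getD _ _ 0, hlen,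
    ← sub_pos, ← sum_sub_distrib]
  exact (h.sum_subgrad_mul_sub_nonneg hlen hB hc).trans_lt
    (sum_lt_sum (fun i _ => hφ _ _) ⟨k, mem_range.2 hk, hφ_strict _ _ hlt⟩)

end Majorizes

section DegreeSequence

variable {n : ℕ} (G : SimpleGraph (Fin n))

theorem degSeq_length : (degSeq G).length = n := by
  simp [degSeq]

theorem degSeq_sortedGE : (degSeq G).SortedGE := by
  rw [degSeq, List.sortedGE_reverse, List.sortedLE_iff_pairwise]
  exact Multiset.pairwise_sort _ _

theorem sum_map_degSeq {M : Type*} [AddCommMonoid M] (φ : ℕ → M) :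
    ((degSeq G).map φ).sum = ∑ v, φ (G.neighborSet v).ncard := by
  rw [degSeq, List.map_reverse, List.sum_reverse, ← Multiset.sum_coe, ← Multiset.map_coe,
    Multiset.sort_eq, Multiset.map_map]
  rfl

theorem degEntropy_eq : degEntropy G = Real.logb 2 (2 * G.edgeSet.ncard) -
    ((degSeq G).map fun k : ℕ => (k : ℝ) * Real.log k).sum /
      (2 * G.edgeSet.ncard * Real.log 2) := by
  simp only [degEntropy, sum_map_degSeq, Real.logb, mul_div_assoc', ← sum_div]
  ring

end DegreeSequence

/-- majorization of degree sequences reverses the order of degree-based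
entropies, with equality iff the degree sequences coincide. -/
theorem entropy_le_of_majorizes {n m : ℕ} (hm : 1 ≤ m) (G G' : SimpleGraph (Fin n))
    (hG : G.edgeSet.ncard = m) (hG' : G'.edgeSet.ncard = m)
    (hmaj : Majorizes (degSeq G) (degSeq G')) :
    degEntropy G ≤ degEntropy G' ∧ (degEntropy G = degEntropy G' ↔ degSeq G = degSeq G') := by
  have hlen : (degSeq G).length = (degSeq G').length := by rw [degSeq_length, degSeq_length]
  have hle := hmaj.sum_map_le hlen (degSeq_sortedGE G') monotone_mulLogSubgrad
    mulLogSubgrad_mul_sub_le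
  have hlt (hne : degSeq G ≠ degSeq G') := hmaj.sum_map_lt hlen (degSeq_sortedGE G')
    monotone_mulLogSubgrad mulLogSubgrad_mul_sub_le
    (fun a b h => mulLogSubgrad_mul_sub_lt h.ne (by omega)) hne
  have hpos : 0 < 2 * (m : ℝ) * Real.log 2 := by
    have : (1 : ℝ) ≤ m := by exact_mod_cast hm
    positivity [Real.log_pos one_lt_two]
  rw [degEntropy_eq, degEntropy_eq, hG, hG']
  refine ⟨by gcongr, fun heq => ?_, fun h => by rw [h]⟩
  by_contra hne
  have := div_lt_div_of_pos_right (hlt hne) hpos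
  linarith
end

section
/- If G is a graph with n ≥ 2 vertices and m ≥ 1 edges that attains the minimum degree-based entropy among all graphs with n vertices and m edges, then G is a threshold graph. -/
open Finset

/-- The threshold-graph characterization: no four distinct vertices `u v w x` with
`uv, wx ∈ E` and `uw, vx ∉ E`. -/
def IsThresholdGraph {V : Type} (G : SimpleGraph V) : Prop :=
  ¬ ∃ u v w x : V, u ≠ v ∧ u ≠ w ∧ u ≠ x ∧ v ≠ w ∧ v ≠ x ∧ w ≠ x ∧
      G.Adj u v ∧ G.Adj w x ∧ ¬ G.Adj u w ∧ ¬ G.Adj v x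

/-! If `uv, wx ∈ E` and `uw, vx ∉ E`, one of the two edges can be rotated about an endpoint so
that the number of edges is unchanged and one unit of degree moves from a vertex to one of at
least the same degree: if `d(x) ≤ d(u)` replace `wx` by `wu`, otherwise replace `vu` by `vx`.
The new degree sequence strictly majorizes the old one, so by strict convexity of `t ↦ t log t`
the sum `∑ d(v) log d(v)` strictly grows and the entropy strictly drops. -/

theorem StrictConvexOn.map_add_map_lt_map_sub_add_map_add {s : Set ℝ} {f : ℝ → ℝ}
    (hf : StrictConvexOn ℝ s f) {x y δ : ℝ} (hx : x - δ ∈ s) (hy : y + δ ∈ s) (hxy : x ≤ y) (hδ : 0 < δ) :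
    f x + f y < f (x - δ) + f (y + δ) := by
  obtain ⟨L, hL⟩ : ∃ L, L = y - x + 2 * δ := ⟨_, rfl⟩
  have hL0 : 0 < L := by linarith
  have ha : 0 < (y + δ - x) / L := div_pos (by linarith) hL0
  have hb : 0 < δ / L := div_pos hδ hL0
  have hab : (y + δ - x) / L + δ / L = 1 := by field_simp; linarith
  have hx' : (y + δ - x) / L * (x - δ) + δ / L * (y + δ) = x := by field_simp; rw [hL]; ring
  have hy' : δ / L * (x - δ) + (y + δ - x) / L * (y + δ) = y := by field_simp; rw [hL]; ring
  -- `x` and `y` are the convex combinations of `x - δ` and `y + δ` with weights `(a, b)`, `(b, a)`.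
  generalize (y + δ - x) / L = a at ha hab hx' hy'
  generalize δ / L = b at hb hab hx' hy'
  have hne : x - δ ≠ y + δ := by linarith
  have hfx : f x < a * f (x - δ) + b * f (y + δ) := by
    simpa only [hx', smul_eq_mul] using hf.2 hx hy hne ha hb hab
  have hfy : f y < b * f (x - δ) + a * f (y + δ) := by
    simpa only [hy', smul_eq_mul] using hf.2 hx hy hne hb ha (by rw [add_comm, hab])
  calc f x + f y < (a + b) * f (x - δ) + (a + b) * f (y + δ) := by linarith
    _ = f (x - δ) + f (y + δ) := by rw [hab, one_mul, one_mul]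

theorem StrictConvexOn.sum_lt_sum_of_transfer {ι : Type*} [Fintype ι] {s : Set ℝ} {f : ℝ → ℝ}
    (hf : StrictConvexOn ℝ s f) {d d' : ι → ℝ} {i j : ι} {δ : ℝ} (hij : i ≠ j) (hδ : 0 < δ)
    (hle : d i ≤ d j) (hi : d i - δ ∈ s) (hj : d j + δ ∈ s)
    (hi' : d' i = d i - δ) (hj' : d' j = d j + δ) (hd' : ∀ k, k ≠ i → k ≠ j → d' k = d k) :
    ∑ k, f (d k) < ∑ k, f (d' k) := by
  classical
  have hrest : ∑ k ∈ {i, j}ᶜ, f (d' k) = ∑ k ∈ {i, j}ᶜ, f (d k) := by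
    refine sum_congr rfl fun k hk ↦ ?_
    simp only [mem_compl, mem_insert, mem_singleton, not_or] at hk
    rw [hd' k hk.1 hk.2]
  rw [← sum_compl_add_sum {i, j}, ← sum_compl_add_sum {i, j} (fun k ↦ f (d' k)),
    sum_pair hij, sum_pair hij, hi', hj', hrest]
  linarith [hf.map_add_map_lt_map_sub_add_map_add hi hj hle hδ]

theorem degEntropy_lt_of_sum_mul_log_lt {V : Type} [Fintype V] {G H : SimpleGraph V}
    (hGH : H.edgeSet.ncard = G.edgeSet.ncard) (hG : 0 < G.edgeSet.ncard)
    (h : ∑ v, ((G.neighborSet v).ncard : ℝ) * Real.log (G.neighborSet v).ncard <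
      ∑ v, ((H.neighborSet v).ncard : ℝ) * Real.log (H.neighborSet v).ncard) :
    degEntropy H < degEntropy G := by
  have hlog2 : 0 < Real.log 2 := Real.log_pos one_lt_two
  simp only [degEntropy, hGH, Real.logb, mul_div_assoc', ← sum_div]
  gcongr

namespace SimpleGraph

variable {V : Type*} {G : SimpleGraph V} {w x u a b : V}

def rotateEdge (G : SimpleGraph V) (w x u : V) : SimpleGraph V :=
  G.deleteEdges {s(w, x)} ⊔ edge w u

theorem rotateEdge_adj :
    (G.rotateEdge w x u).Adj a b ↔
      G.Adj a b ∧ s(a, b) ≠ s(w, x) ∨ (a = w ∧ b = u ∨ a = u ∧ b = w) ∧ a ≠ b := by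
  simp [rotateEdge, edge_adj]

theorem edgeSet_rotateEdge (huw : u ≠ w) :
    (G.rotateEdge w x u).edgeSet = insert s(w, u) (G.edgeSet \ {s(w, x)}) := by
  rw [rotateEdge, edgeSet_sup, edgeSet_deleteEdges, edgeSet_edge_of_ne huw.symm,
    Set.union_singleton]

theorem neighborSet_rotateEdge_new (huw : u ≠ w) (hux : u ≠ x) :
    (G.rotateEdge w x u).neighborSet u = insert w (G.neighborSet u) := by
  ext b
  simp only [mem_neighborSet, rotateEdge_adj, Set.mem_insert_iff]
  grind

theorem neighborSet_rotateEdge_old (hxw : x ≠ w) (hxu : x ≠ u) :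
    (G.rotateEdge w x u).neighborSet x = G.neighborSet x \ {w} := by
  ext b
  simp only [mem_neighborSet, rotateEdge_adj, Set.mem_sdiff, Set.mem_singleton_iff]
  grind

theorem neighborSet_rotateEdge_pivot (huw : u ≠ w) (hxw : x ≠ w) :
    (G.rotateEdge w x u).neighborSet w = insert u (G.neighborSet w \ {x}) := by
  ext b
  simp only [mem_neighborSet, rotateEdge_adj, Set.mem_insert_iff, Set.mem_sdiff,
    Set.mem_singleton_iff]
  grind

theorem neighborSet_rotateEdge_of_ne (hau : a ≠ u) (haw : a ≠ w) (hax : a ≠ x) :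
    (G.rotateEdge w x u).neighborSet a = G.neighborSet a := by
  ext b
  simp only [mem_neighborSet, rotateEdge_adj]
  grind

theorem ncard_neighborSet_rotateEdge_old (hwx : G.Adj w x) (hxu : x ≠ u) :
    ((G.rotateEdge w x u).neighborSet x).ncard = (G.neighborSet x).ncard - 1 := by
  rw [neighborSet_rotateEdge_old hwx.ne.symm hxu,
    Set.ncard_sdiff_singleton_of_mem ((G.mem_neighborSet x w).2 hwx.symm)]

variable [Finite V]

theorem ncard_edgeSet_rotateEdge (hwx : G.Adj w x) (hwu : ¬G.Adj w u) (huw : u ≠ w) :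
    (G.rotateEdge w x u).edgeSet.ncard = G.edgeSet.ncard := by
  have hnew : s(w, u) ∉ G.edgeSet \ {s(w, x)} := fun h ↦ hwu h.1
  rw [edgeSet_rotateEdge huw, Set.ncard_insert_of_notMem hnew,
    Set.ncard_sdiff_singleton_add_one (G.mem_edgeSet.2 hwx)]

theorem ncard_neighborSet_rotateEdge_new (hwu : ¬G.Adj w u) (huw : u ≠ w) (hux : u ≠ x) :
    ((G.rotateEdge w x u).neighborSet u).ncard = (G.neighborSet u).ncard + 1 := by
  rw [neighborSet_rotateEdge_new huw hux, Set.ncard_insert_of_notMem fun h ↦ hwu h.symm]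

theorem ncard_neighborSet_rotateEdge_of_ne (hwx : G.Adj w x) (hwu : ¬G.Adj w u) (hau : a ≠ u)
    (hax : a ≠ x) : ((G.rotateEdge w x u).neighborSet a).ncard = (G.neighborSet a).ncard := by
  obtain rfl | haw := eq_or_ne a w
  · have hu : u ∉ G.neighborSet a \ {x} := fun h ↦ hwu h.1
    rw [neighborSet_rotateEdge_pivot hau.symm hax.symm, Set.ncard_insert_of_notMem hu,
      Set.ncard_sdiff_singleton_add_one ((G.mem_neighborSet a x).2 hwx)]
  · rw [neighborSet_rotateEdge_of_ne hau haw hax]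

end SimpleGraph

open SimpleGraph in
theorem degEntropy_rotateEdge_lt {V : Type} [Fintype V] {G : SimpleGraph V} {w x u : V}
    (hwx : G.Adj w x) (hwu : ¬G.Adj w u) (huw : u ≠ w) (hux : u ≠ x)
    (hdeg : (G.neighborSet x).ncard ≤ (G.neighborSet u).ncard) :
    degEntropy (G.rotateEdge w x u) < degEntropy G := by
  have hx : 1 ≤ (G.neighborSet x).ncard :=
    (Set.ncard_pos).2 ⟨w, (G.mem_neighborSet x w).2 hwx.symm⟩
  refine degEntropy_lt_of_sum_mul_log_lt (ncard_edgeSet_rotateEdge hwx hwu huw)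
    ((Set.ncard_pos).2 ⟨s(w, x), G.mem_edgeSet.2 hwx⟩) ?_
  refine Real.strictConvexOn_mul_log.sum_lt_sum_of_transfer hux.symm one_pos
    (by exact_mod_cast hdeg) ?_ (Set.mem_Ici.2 (by positivity)) ?_ ?_ fun a hax hau ↦ ?_
  · simp only [Set.mem_Ici, sub_nonneg, Nat.one_le_cast, hx]
  · rw [ncard_neighborSet_rotateEdge_old hwx hux.symm, Nat.cast_sub hx, Nat.cast_one]
  · rw [ncard_neighborSet_rotateEdge_new hwu huw hux, Nat.cast_succ]
  · rw [ncard_neighborSet_rotateEdge_of_ne hwx hwu hau hax]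

theorem minimizer_isThreshold_general {n m : ℕ}
    (G : SimpleGraph (Fin n)) (hGm : G.edgeSet.ncard = m)
    (hmin : ∀ H : SimpleGraph (Fin n), H.edgeSet.ncard = m → degEntropy G ≤ degEntropy H) :
    IsThresholdGraph G := by
  have no_rotation : ∀ {w x u}, G.Adj w x → ¬G.Adj w u → u ≠ w → u ≠ x →
      (G.neighborSet x).ncard ≤ (G.neighborSet u).ncard → False :=
    fun hwx hwu huw hux hdeg ↦ (degEntropy_rotateEdge_lt hwx hwu huw hux hdeg).not_ge <|
      hmin _ ((SimpleGraph.ncard_edgeSet_rotateEdge hwx hwu huw).trans hGm)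
  rintro ⟨u, v, w, x, -, huw, hux, -, hvx, -, hadj_uv, hadj_wx, hnadj_uw, hnadj_vx⟩
  rcases le_total (G.neighborSet x).ncard (G.neighborSet u).ncard with hdeg | hdeg
  · exact no_rotation hadj_wx (fun h ↦ hnadj_uw h.symm) huw hux hdeg
  · exact no_rotation hadj_uv.symm hnadj_vx hvx.symm hux.symm hdeg

/-- a minimizer of the degree-based entropy among `(n,m)`-graphs
is a threshold graph. -/
theorem minimizer_isThreshold {n m : ℕ} (hn : 2 ≤ n) (hm : 1 ≤ m)
    (G : SimpleGraph (Fin n)) (hGm : G.edgeSet.ncard = m)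
    (hmin : ∀ H : SimpleGraph (Fin n), H.edgeSet.ncard = m → degEntropy G ≤ degEntropy H) :
    IsThresholdGraph G :=
  minimizer_isThreshold_general G hGm hmin
end

section
/- If G is a bipartite graph with n ≥ 2 vertices and m ≥ 1 edges that attains the minimum degree-based entropy among all bipartite graphs with n vertices and m edges, then G is a difference graph. -/
open Finset

/-- A bipartite graph (with bipartition given by `side`) is a difference graph:
no `x₁ x₂` on one side and `y₁ y₂` on the other with `x₁y₁, x₂y₂ ∈ E`
and `x₁y₂, x₂y₁ ∉ E`. -/
def IsDifferenceGraph {V : Type} (G : SimpleGraph V) (side : V → Bool) : Prop :=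
  ¬ ∃ x₁ x₂ y₁ y₂ : V, side x₁ = true ∧ side x₂ = true ∧ side y₁ = false ∧ side y₂ = false ∧
      G.Adj x₁ y₁ ∧ G.Adj x₂ y₂ ∧ ¬ G.Adj x₁ y₂ ∧ ¬ G.Adj x₂ y₁

/-!
If `x₁y₁, x₂y₂` is an induced `2K₂` with `d(x₂) ≤ d(x₁)`, move the edge `x₂y₂` to `x₁y₂`.
The new graph is bipartite with the same bipartition and number of edges, and only the degrees of
`x₁` and `x₂` change (`y₂` trades `x₂` for `x₁`): they become `d(x₁) + 1` and `d(x₂) - 1`.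
By strict convexity of `k ↦ k log k` this strictly increases `∑ d log d`, hence strictly
decreases the entropy, contradicting minimality.
-/

lemma strictMono_mul_log_succ_sub_mul_log :
    StrictMono fun k : ℕ => ((k + 1 : ℕ) : ℝ) * Real.log ((k + 1 : ℕ) : ℝ) - k * Real.log k := by
  refine strictMono_nat_of_lt_succ fun k => ?_
  have := Real.strictConvexOn_mul_log.slope_strict_mono_adjacent (x := k) (y := k + 1) (z := k + 2)
    (Set.mem_Ici.2 k.cast_nonneg) (Set.mem_Ici.2 (by positivity)) (by linarith) (by linarith)
  push_cast
  convert this using 1 <;> ring_nf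

lemma mul_logb_add_mul_logb_lt {a c : ℕ} (h : c < a) :
    (a : ℝ) * Real.logb 2 a + ((c + 1 : ℕ) : ℝ) * Real.logb 2 ((c + 1 : ℕ) : ℝ) <
      ((a + 1 : ℕ) : ℝ) * Real.logb 2 ((a + 1 : ℕ) : ℝ) + c * Real.logb 2 c := by
  have := strictMono_mul_log_succ_sub_mul_log h
  simp only [Real.logb, ← mul_div_assoc, ← add_div]
  exact div_lt_div_of_pos_right (by linarith) (Real.log_pos one_lt_two)

namespace SimpleGraph

section

variable {V : Type*} (G : SimpleGraph V) (p q r : V)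

def moveEdge : SimpleGraph V :=
  fromEdgeSet (insert s(p, r) (G.edgeSet \ {s(q, r)}))

variable {G p q r}

lemma moveEdge_adj (hne : p ≠ r) {u v : V} :
    (G.moveEdge p q r).Adj u v ↔ s(u, v) = s(p, r) ∨ G.Adj u v ∧ s(u, v) ≠ s(q, r) := by
  rw [moveEdge, fromEdgeSet_adj]
  simp only [Set.mem_insert_iff, Set.mem_sdiff, Set.mem_singleton_iff, mem_edgeSet]
  constructor
  · exact fun h => h.1
  · rintro (h | h)
    · refine ⟨.inl h, fun huv => hne ?_⟩
      rcases Sym2.eq_iff.1 h with ⟨rfl, rfl⟩ | ⟨rfl, rfl⟩ <;> simp [huv]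
    · exact ⟨.inr h, h.1.ne⟩

lemma ncard_edgeSet_moveEdge (hqr : G.Adj q r) (hpr : ¬G.Adj p r) (hne : p ≠ r) :
    (G.moveEdge p q r).edgeSet.ncard = G.edgeSet.ncard := by
  have hE : (G.moveEdge p q r).edgeSet = insert s(p, r) (G.edgeSet \ {s(q, r)}) := by
    ext ⟨u, v⟩
    exact moveEdge_adj hne
  rw [hE, Set.ncard_exchange (s := G.edgeSet) hpr hqr]

lemma colors_ne_of_moveEdge_adj {β : Type*} {c : V → β} (hc : ∀ u v, G.Adj u v → c u ≠ c v)
    (hpq : c p = c q) (hqr : G.Adj q r) {u v : V} (huv : (G.moveEdge p q r).Adj u v) :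
    c u ≠ c v := by
  have hne : p ≠ r := fun h => hc q r hqr (hpq ▸ h ▸ rfl)
  rcases (moveEdge_adj hne).1 huv with h | ⟨h, -⟩
  · rcases Sym2.eq_iff.1 h with ⟨rfl, rfl⟩ | ⟨rfl, rfl⟩
    · exact hpq ▸ hc _ _ hqr
    · exact hpq ▸ (hc _ _ hqr).symm
  · exact hc u v h

lemma neighborSet_moveEdge_left (hne : p ≠ r) :
    (G.moveEdge p q r).neighborSet p = insert r (G.neighborSet p) := by
  ext w
  grind [moveEdge_adj hne, mem_neighborSet, Sym2.eq_iff]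

lemma neighborSet_moveEdge_middle (hne : p ≠ r) (hpq : p ≠ q) (hqr : q ≠ r) :
    (G.moveEdge p q r).neighborSet q = G.neighborSet q \ {r} := by
  ext w
  grind [moveEdge_adj hne, mem_neighborSet, Sym2.eq_iff]

lemma neighborSet_moveEdge_right (hne : p ≠ r) :
    (G.moveEdge p q r).neighborSet r = insert p (G.neighborSet r \ {q}) := by
  ext w
  grind [moveEdge_adj hne, mem_neighborSet, Sym2.eq_iff, G.symm]

lemma neighborSet_moveEdge_of_ne (hne : p ≠ r) {v : V} (hvp : v ≠ p) (hvq : v ≠ q) (hvr : v ≠ r) :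
    (G.moveEdge p q r).neighborSet v = G.neighborSet v := by
  ext w
  grind [moveEdge_adj hne, mem_neighborSet, Sym2.eq_iff]

lemma ncard_neighborSet_moveEdge_of_ne (hqr : G.Adj q r) (hpr : ¬G.Adj p r) (hne : p ≠ r)
    {v : V} (hvp : v ≠ p) (hvq : v ≠ q) :
    ((G.moveEdge p q r).neighborSet v).ncard = (G.neighborSet v).ncard := by
  obtain rfl | hvr := eq_or_ne v r
  · rw [neighborSet_moveEdge_right hne]
    exact Set.ncard_exchange (fun h => hpr h.symm) hqr.symm
  · rw [neighborSet_moveEdge_of_ne hne hvp hvq hvr]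

variable [G.LocallyFinite]

lemma ncard_neighborSet_moveEdge_left (hpr : ¬G.Adj p r) (hne : p ≠ r) :
    ((G.moveEdge p q r).neighborSet p).ncard = (G.neighborSet p).ncard + 1 := by
  rw [neighborSet_moveEdge_left hne,
    Set.ncard_insert_of_notMem (show r ∉ G.neighborSet p from hpr)]

lemma ncard_neighborSet_moveEdge_middle_add_one (hqr : G.Adj q r) (hpr : ¬G.Adj p r)
    (hne : p ≠ r) : ((G.moveEdge p q r).neighborSet q).ncard + 1 = (G.neighborSet q).ncard := by
  have hpq : p ≠ q := by rintro rfl; exact hpr hqr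
  rw [neighborSet_moveEdge_middle hne hpq hqr.ne,
    Set.ncard_sdiff_singleton_add_one (show r ∈ G.neighborSet q from hqr)]

end

section

variable {V : Type} [Fintype V]

noncomputable def degreeLogSum (G : SimpleGraph V) : ℝ :=
  ∑ v : V, ((G.neighborSet v).ncard : ℝ) * Real.logb 2 ((G.neighborSet v).ncard)

variable {G : SimpleGraph V} {p q r : V}

lemma degreeLogSum_lt_moveEdge (hqr : G.Adj q r) (hpr : ¬G.Adj p r) (hne : p ≠ r)
    (hdeg : (G.neighborSet q).ncard ≤ (G.neighborSet p).ncard) :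
    G.degreeLogSum < (G.moveEdge p q r).degreeLogSum := by
  classical
  have hpq : p ≠ q := by rintro rfl; exact hpr hqr
  have hq := ncard_neighborSet_moveEdge_middle_add_one hqr hpr hne
  rw [degreeLogSum, degreeLogSum, ← sub_pos, ← Finset.sum_sub_distrib,
    Fintype.sum_eq_add p q hpq fun v ⟨hvp, hvq⟩ => by
      rw [ncard_neighborSet_moveEdge_of_ne hqr hpr hne hvp hvq, sub_self],
    ncard_neighborSet_moveEdge_left hpr hne, ← hq]
  linarith [mul_logb_add_mul_logb_lt (a := (G.neighborSet p).ncard)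
    (c := ((G.moveEdge p q r).neighborSet q).ncard) (by omega)]

lemma degEntropy_moveEdge_lt (hqr : G.Adj q r) (hpr : ¬G.Adj p r) (hne : p ≠ r)
    (hdeg : (G.neighborSet q).ncard ≤ (G.neighborSet p).ncard) :
    degEntropy (G.moveEdge p q r) < degEntropy G := by
  have hm : (0 : ℝ) < G.edgeSet.ncard := by
    exact_mod_cast (Set.ncard_pos (Set.toFinite _)).2 ⟨s(q, r), hqr⟩
  rw [degEntropy, degEntropy, ncard_edgeSet_moveEdge hqr hpr hne]
  exact sub_lt_sub_left (mul_lt_mul_of_pos_left (degreeLogSum_lt_moveEdge hqr hpr hne hdeg)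
    (by positivity)) _

end

end SimpleGraph

theorem minimizer_isDifference_general {n m : ℕ}
    (G : SimpleGraph (Fin n)) (side : Fin n → Bool)
    (hbip : ∀ u v : Fin n, G.Adj u v → side u ≠ side v)
    (hGm : G.edgeSet.ncard = m)
    (hmin : ∀ (H : SimpleGraph (Fin n)) (sideH : Fin n → Bool),
      (∀ u v : Fin n, H.Adj u v → sideH u ≠ sideH v) → H.edgeSet.ncard = m →
        degEntropy G ≤ degEntropy H) :
    IsDifferenceGraph G side := by
  have no_move : ∀ p q r, side p = side q → G.Adj q r → ¬G.Adj p r →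
      (G.neighborSet q).ncard ≤ (G.neighborSet p).ncard → False := by
    intro p q r hpq hqr hpr hdeg
    have hne : p ≠ r := fun h => hbip q r hqr (hpq ▸ h ▸ rfl)
    refine (hmin _ side (fun u v => G.colors_ne_of_moveEdge_adj hbip hpq hqr)
      (by rw [G.ncard_edgeSet_moveEdge hqr hpr hne, hGm])).not_gt ?_
    exact G.degEntropy_moveEdge_lt hqr hpr hne hdeg
  rintro ⟨x₁, x₂, y₁, y₂, hx₁, hx₂, -, -, h₁₁, h₂₂, hn₁₂, hn₂₁⟩
  rcases le_total (G.neighborSet x₂).ncard (G.neighborSet x₁).ncard with h | h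
  · exact no_move x₁ x₂ y₂ (hx₁.trans hx₂.symm) h₂₂ hn₁₂ h
  · exact no_move x₂ x₁ y₁ (hx₂.trans hx₁.symm) h₁₁ hn₂₁ h

/-- a minimizer of the degree-based entropy among `(n,m)`-bipartite graphs
is a difference graph. -/
theorem minimizer_isDifference {n m : ℕ} (hn : 2 ≤ n) (hm : 1 ≤ m)
    (G : SimpleGraph (Fin n)) (side : Fin n → Bool)
    (hbip : ∀ u v : Fin n, G.Adj u v → side u ≠ side v)
    (hGm : G.edgeSet.ncard = m)
    (hmin : ∀ (H : SimpleGraph (Fin n)) (sideH : Fin n → Bool),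
      (∀ u v : Fin n, H.Adj u v → sideH u ≠ sideH v) → H.edgeSet.ncard = m →
        degEntropy G ≤ degEntropy H) :
    IsDifferenceGraph G side :=
  minimizer_isDifference_general G side hbip hGm hmin
end

section
/- For any bipartite graph G with n ≥ 2 vertices and m edges with 1 ≤ m ≤ ⌈n/2⌉·⌊n/2⌋, the degree-based entropy satisfies I_d(G) ≥ 1 + log₂(√m), with equality if and only if G is isomorphic to the disjoint union of a complete bipartite graph K_{q,b} and n − q − b isolated vertices, for some positive integers q, b with qb = m and q + b ≤ n. -/
open Finset

theorem Real.log_le_log_add_div_sub_one {a c : ℝ} (ha : 0 < a) (hc : 0 < c) :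
    Real.log a ≤ Real.log c + a / c - 1 := by
  have := Real.log_le_sub_one_of_pos (div_pos ha hc)
  rw [Real.log_div ha.ne' hc.ne'] at this
  linarith

namespace SimpleGraph

section ncard

variable {V W U : Type*}

theorem ncard_neighborSet_eq_degree (G : SimpleGraph V) (v : V) [Fintype (G.neighborSet v)] :
    (G.neighborSet v).ncard = G.degree v := by
  rw [← Nat.card_coe_set_eq, Nat.card_eq_fintype_card, card_neighborSet_eq_degree]

theorem Iso.ncard_neighborSet {G : SimpleGraph V} {G' : SimpleGraph W} (φ : G ≃g G') (v : V) :
    (G'.neighborSet (φ v)).ncard = (G.neighborSet v).ncard := by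
  rw [← Nat.card_coe_set_eq, ← Nat.card_coe_set_eq]
  exact Nat.card_congr (φ.mapNeighborSet v).symm

theorem ncard_neighborSet_sum_inl (G : SimpleGraph V) (H : SimpleGraph W) (v : V) :
    ((G ⊕g H).neighborSet (.inl v)).ncard = (G.neighborSet v).ncard := by
  rw [neighborSet_sum_inl, Set.ncard_image_of_injective _ Sum.inl_injective]

theorem ncard_neighborSet_sum_inr (G : SimpleGraph V) (H : SimpleGraph W) (w : W) :
    ((G ⊕g H).neighborSet (.inr w)).ncard = (H.neighborSet w).ncard := by
  rw [neighborSet_sum_inr, Set.ncard_image_of_injective _ Sum.inr_injective]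

theorem neighborSet_completeBipartiteGraph_inl (v : V) :
    (completeBipartiteGraph V W).neighborSet (.inl v) = Set.range .inr := by
  ext (_ | _) <;> simp

theorem neighborSet_completeBipartiteGraph_inr (w : W) :
    (completeBipartiteGraph V W).neighborSet (.inr w) = Set.range .inl := by
  ext (_ | _) <;> simp

theorem sum_degree_mul_log_degree_of_iso_completeBipartiteGraph_sum_bot
    [Fintype U] [Fintype V] [Fintype W] {X : Type*} [Fintype X] {G : SimpleGraph X}
    [DecidableRel G.Adj]
    (φ : G ≃g completeBipartiteGraph V W ⊕g (⊥ : SimpleGraph U)) :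
    ∑ x, (G.degree x : ℝ) * Real.log (G.degree x) =
      (Fintype.card V * Fintype.card W : ℕ) *
        Real.log (Fintype.card V * Fintype.card W : ℕ) := by
  set H := completeBipartiteGraph V W ⊕g (⊥ : SimpleGraph U)
  simp_rw [← ncard_neighborSet_eq_degree]
  rw [Fintype.sum_equiv φ.toEquiv _ (fun w => ((H.neighborSet w).ncard : ℝ) *
    Real.log (H.neighborSet w).ncard) fun x => by rw [← φ.ncard_neighborSet x]; rfl]
  simp only [H, Fintype.sum_sum_type, ncard_neighborSet_sum_inl, ncard_neighborSet_sum_inr,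
    neighborSet_completeBipartiteGraph_inl, neighborSet_completeBipartiteGraph_inr,
    Set.ncard_range_of_injective Sum.inl_injective,
    Set.ncard_range_of_injective Sum.inr_injective, neighborSet_bot, Set.ncard_empty, sum_const,
    card_univ, nsmul_eq_mul, Nat.card_eq_fintype_card, Nat.cast_zero, zero_mul, mul_zero, add_zero,
    Nat.cast_mul]
  obtain hV | hV := eq_or_ne (Fintype.card V) 0
  · simp [hV]
  obtain hW | hW := eq_or_ne (Fintype.card W) 0
  · simp [hW]
  rw [Real.log_mul (Nat.cast_ne_zero.2 hV) (Nat.cast_ne_zero.2 hW)]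
  ring

end ncard

variable {V : Type*} [Fintype V] {G : SimpleGraph V}

theorem nonempty_iso_completeBipartiteGraph_sum_bot {A B : Finset V} (hAB : Disjoint A B)
    (hG : ∀ u v, G.Adj u v ↔ u ∈ A ∧ v ∈ B ∨ u ∈ B ∧ v ∈ A) :
    Nonempty (G ≃g completeBipartiteGraph (Fin #A) (Fin #B) ⊕g
      (⊥ : SimpleGraph (Fin (Fintype.card V - #A - #B)))) := by
  classical
  have hC : #(A ∪ B)ᶜ = Fintype.card V - #A - #B := by
    rw [card_compl, card_union_of_disjoint hAB, Nat.sub_sub]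
  have hle : #A + #B ≤ Fintype.card V := card_union_of_disjoint hAB ▸ card_le_univ _
  have hAB' : ∀ v ∈ A, v ∉ B := fun _ hv => Finset.disjoint_left.1 hAB hv
  have hBA : ∀ v ∈ B, v ∉ A := fun _ hv => Finset.disjoint_right.1 hAB hv
  let a (i : Fin #A) : V := A.equivFin.symm i
  let b (j : Fin #B) : V := B.equivFin.symm j
  let c (k : Fin (Fintype.card V - #A - #B)) : V := ((A ∪ B)ᶜ.equivFinOfCardEq hC).symm k
  have ha i : a i ∈ A := (A.equivFin.symm i).2
  have hb j : b j ∈ B := (B.equivFin.symm j).2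
  have hc k : c k ∉ A ∧ c k ∉ B := by
    simpa using (((A ∪ B)ᶜ.equivFinOfCardEq hC).symm k).2
  have hf : Function.Bijective (Sum.elim (Sum.elim a b) c) := by
    rw [Fintype.bijective_iff_injective_and_card]
    refine ⟨.sumElim (.sumElim ?_ ?_ ?_) ?_ ?_, by simp; omega⟩
    · exact Subtype.val_injective.comp A.equivFin.symm.injective
    · exact Subtype.val_injective.comp B.equivFin.symm.injective
    · exact fun i j hij => hAB' _ (ha i) (hij ▸ hb j)
    · exact Subtype.val_injective.comp ((A ∪ B)ᶜ.equivFinOfCardEq hC).symm.injective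
    · rintro (i | j) k hik
      · exact (hc k).1 (hik ▸ ha i)
      · exact (hc k).2 (hik ▸ hb j)
  refine ⟨(⟨Equiv.ofBijective _ hf, ?_⟩ : _ ≃g G).symm⟩
  rintro ((i | j) | k) ((i' | j') | k') <;>
    simp [hG, ha, hb, hc, hAB' _ (ha _), hBA _ (hb _)]

theorem Coloring.isBipartiteWith (C : G.Coloring Bool) :
    G.IsBipartiteWith ↑({v | C v = false} : Finset V) ↑({v | C v = true} : Finset V) := by
  refine ⟨by simp [Set.disjoint_left], fun v w hvw => ?_⟩
  have := C.valid hvw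
  cases hv : C v <;> cases hw : C w <;> simp_all

variable [DecidableRel G.Adj] {s t : Finset V}

theorem degree_mul_degree_pos_of_mem_interedges {e : V × V} (he : e ∈ G.interedges s t) :
    0 < G.degree e.1 * G.degree e.2 :=
  have hadj := (G.mem_interedges_iff.1 he).2.2
  Nat.mul_pos ((G.degree_pos_iff_exists_adj e.1).2 ⟨_, hadj⟩)
    ((G.degree_pos_iff_exists_adj e.2).2 ⟨_, hadj.symm⟩)

namespace IsBipartiteWith

theorem sum_degree_smul_eq_sum_interedges {M : Type*} [AddCommMonoid M]
    (h : G.IsBipartiteWith s t) (f : V → M) :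
    ∑ v, G.degree v • f v = ∑ e ∈ G.interedges s t, (f e.1 + f e.2) := by
  classical
  have hleft : ∑ e ∈ G.interedges s t, f e.1 = ∑ v ∈ s, G.degree v • f v := by
    rw [interedges_def, sum_filter, sum_product]
    refine sum_congr rfl fun v hv => ?_
    rw [← sum_filter]
    dsimp only
    rw [sum_const, ← isBipartiteWith_neighborFinset h hv, card_neighborFinset_eq_degree]
  have hright : ∑ e ∈ G.interedges s t, f e.2 = ∑ w ∈ t, G.degree w • f w := by
    rw [interedges_def, sum_filter, sum_product_right]
    refine sum_congr rfl fun w hw => ?_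
    rw [← sum_filter]
    dsimp only
    rw [sum_const, ← isBipartiteWith_neighborFinset' h hw, card_neighborFinset_eq_degree]
  have hisolated : ∀ v ∈ univ, v ∉ s ∪ t → G.degree v • f v = 0 := fun v _ hv => by
    rw [(G.degree_eq_zero_iff_notMem_support v).2 fun hsupp => hv (by
      simpa using isBipartiteWith_support_subset h hsupp), zero_smul]
  rw [sum_add_distrib, hleft, hright, ← sum_union (disjoint_coe.1 h.disjoint),
    sum_subset (subset_univ _) hisolated]

theorem card_interedges (h : G.IsBipartiteWith s t) :
    #(G.interedges s t) = #G.edgeFinset := by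
  have := h.sum_degree_smul_eq_sum_interedges fun _ => 1
  simp only [smul_eq_mul, mul_one, sum_degrees_eq_twice_card_edges, sum_const] at this
  omega

theorem sq_card_edgeFinset_eq_sum_product (h : G.IsBipartiteWith s t) :
    #G.edgeFinset ^ 2 = ∑ e ∈ s ×ˢ t, G.degree e.1 * G.degree e.2 := by
  rw [sum_product' (f := fun v w => G.degree v * G.degree w), ← sum_mul_sum,
    isBipartiteWith_sum_degrees_eq_card_edges h, isBipartiteWith_sum_degrees_eq_card_edges' h, sq]

theorem sum_interedges_degree_mul_degree_le (h : G.IsBipartiteWith s t) :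
    ∑ e ∈ G.interedges s t, G.degree e.1 * G.degree e.2 ≤ #G.edgeFinset ^ 2 :=
  h.sq_card_edgeFinset_eq_sum_product ▸ sum_le_sum_of_subset (filter_subset _ _)

theorem adj_of_sum_interedges_degree_mul_degree_eq (h : G.IsBipartiteWith s t)
    (heq : ∑ e ∈ G.interedges s t, G.degree e.1 * G.degree e.2 = #G.edgeFinset ^ 2)
    {v w : V} (hv : v ∈ s) (hw : w ∈ t) (hdv : 0 < G.degree v) (hdw : 0 < G.degree w) :
    G.Adj v w := by
  by_contra hvw
  refine (sum_lt_sum_of_subset (f := fun e => G.degree e.1 * G.degree e.2)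
    (filter_subset _ (s ×ˢ t)) (i := (v, w)) (mem_product.2 ⟨hv, hw⟩)
    (fun he => hvw (G.mem_interedges_iff.1 he).2.2) (Nat.mul_pos hdv hdw)
    fun _ _ _ => Nat.zero_le _).ne ?_
  rw [← h.sq_card_edgeFinset_eq_sum_product]
  exact heq

theorem sum_degree_mul_log_degree_eq (h : G.IsBipartiteWith s t) :
    ∑ v, (G.degree v : ℝ) * Real.log (G.degree v) =
      ∑ e ∈ G.interedges s t, Real.log (G.degree e.1 * G.degree e.2 : ℕ) := by
  simp_rw [← nsmul_eq_mul, h.sum_degree_smul_eq_sum_interedges]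
  refine sum_congr rfl fun e he => ?_
  have hadj := (G.mem_interedges_iff.1 he).2.2
  rw [Nat.cast_mul, Real.log_mul
    (Nat.cast_ne_zero.2 (G.degree_pos_iff_exists_adj e.1 |>.2 ⟨_, hadj⟩).ne')
    (Nat.cast_ne_zero.2 (G.degree_pos_iff_exists_adj e.2 |>.2 ⟨_, hadj.symm⟩).ne')]

theorem sum_degree_mul_log_degree_le_add_sum_div (h : G.IsBipartiteWith s t)
    (hm : 0 < #G.edgeFinset) :
    ∑ v, (G.degree v : ℝ) * Real.log (G.degree v) ≤ #G.edgeFinset * Real.log #G.edgeFinset +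
      (∑ e ∈ G.interedges s t, G.degree e.1 * G.degree e.2 : ℕ) / #G.edgeFinset -
        #G.edgeFinset := by
  have hm' : (0 : ℝ) < #G.edgeFinset := by exact_mod_cast hm
  rw [h.sum_degree_mul_log_degree_eq]
  calc ∑ e ∈ G.interedges s t, Real.log (G.degree e.1 * G.degree e.2 : ℕ)
      ≤ ∑ e ∈ G.interedges s t, (Real.log #G.edgeFinset +
          (G.degree e.1 * G.degree e.2 : ℕ) / #G.edgeFinset - 1) :=
        sum_le_sum fun e he => Real.log_le_log_add_div_sub_one
          (by exact_mod_cast degree_mul_degree_pos_of_mem_interedges he) hm'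
    _ = _ := by
        rw [sum_sub_distrib, sum_add_distrib, ← sum_div, sum_const, sum_const, h.card_interedges]
        push_cast
        ring

theorem sum_degree_mul_log_degree_le (h : G.IsBipartiteWith s t) :
    ∑ v, (G.degree v : ℝ) * Real.log (G.degree v) ≤
      #G.edgeFinset * Real.log #G.edgeFinset := by
  rcases Nat.eq_zero_or_pos #G.edgeFinset with hm | hm
  · rw [h.sum_degree_mul_log_degree_eq, card_eq_zero.1 (h.card_interedges.trans hm), hm]
    simp
  have hm' : (0 : ℝ) < #G.edgeFinset := by exact_mod_cast hm
  have hdiv : ((∑ e ∈ G.interedges s t, G.degree e.1 * G.degree e.2 : ℕ) : ℝ) /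
      #G.edgeFinset ≤ #G.edgeFinset := by
    rw [div_le_iff₀ hm', ← sq]
    exact_mod_cast h.sum_interedges_degree_mul_degree_le
  linarith [h.sum_degree_mul_log_degree_le_add_sum_div hm]

theorem adj_of_sum_degree_mul_log_degree_eq (h : G.IsBipartiteWith s t)
    (heq : ∑ v, (G.degree v : ℝ) * Real.log (G.degree v) =
      #G.edgeFinset * Real.log #G.edgeFinset)
    {v w : V} (hv : v ∈ s) (hw : w ∈ t) (hdv : 0 < G.degree v) (hdw : 0 < G.degree w) :
    G.Adj v w := by
  have hm : 0 < #G.edgeFinset := by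
    rw [← isBipartiteWith_sum_degrees_eq_card_edges h]
    exact hdv.trans_le <| single_le_sum (f := fun v => G.degree v) (fun _ _ => Nat.zero_le _) hv
  have hm' : (0 : ℝ) < #G.edgeFinset := by exact_mod_cast hm
  refine h.adj_of_sum_interedges_degree_mul_degree_eq
    (le_antisymm h.sum_interedges_degree_mul_degree_le ?_) hv hw hdv hdw
  have hdiv : (#G.edgeFinset : ℝ) ≤
      ((∑ e ∈ G.interedges s t, G.degree e.1 * G.degree e.2 : ℕ) : ℝ) / #G.edgeFinset := by
    linarith [h.sum_degree_mul_log_degree_le_add_sum_div hm]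
  rw [le_div_iff₀ hm', ← sq] at hdiv
  exact_mod_cast hdiv

theorem exists_iso_completeBipartiteGraph_sum_bot (h : G.IsBipartiteWith s t)
    (hcomplete : ∀ v ∈ s, ∀ w ∈ t, 0 < G.degree v → 0 < G.degree w → G.Adj v w) :
    ∃ q b, q * b = #G.edgeFinset ∧ q + b ≤ Fintype.card V ∧
      Nonempty (G ≃g completeBipartiteGraph (Fin q) (Fin b) ⊕g
        (⊥ : SimpleGraph (Fin (Fintype.card V - q - b)))) := by
  classical
  set A := {v ∈ s | 0 < G.degree v}
  set B := {w ∈ t | 0 < G.degree w}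
  have hAB : Disjoint A B := disjoint_filter_filter (disjoint_coe.1 h.disjoint)
  have hG : ∀ u v, G.Adj u v ↔ u ∈ A ∧ v ∈ B ∨ u ∈ B ∧ v ∈ A := by
    refine fun u v => ⟨fun huv => ?_, ?_⟩
    · have hdu := (G.degree_pos_iff_exists_adj u).2 ⟨v, huv⟩
      have hdv := (G.degree_pos_iff_exists_adj v).2 ⟨u, huv.symm⟩
      rcases h.mem_of_adj huv with ⟨hu, hv⟩ | ⟨hu, hv⟩ <;>
        simp [A, B, hdu, hdv, mem_coe.1 hu, mem_coe.1 hv]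
    · rintro (⟨hu, hv⟩ | ⟨hu, hv⟩) <;> simp only [A, B, mem_filter] at hu hv
      · exact hcomplete _ hu.1 _ hv.1 hu.2 hv.2
      · exact (hcomplete _ hv.1 _ hu.1 hv.2 hu.2).symm
  have hinter : G.interedges s t = A ×ˢ B := by
    ext ⟨u, v⟩
    simp only [mk_mem_interedges_iff, mem_product, A, B, mem_filter]
    exact ⟨fun ⟨hu, hv, huv⟩ => ⟨⟨hu, (G.degree_pos_iff_exists_adj u).2 ⟨v, huv⟩⟩,
        ⟨hv, (G.degree_pos_iff_exists_adj v).2 ⟨u, huv.symm⟩⟩⟩,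
      fun ⟨hu, hv⟩ => ⟨hu.1, hv.1, hcomplete _ hu.1 _ hv.1 hu.2 hv.2⟩⟩
  exact ⟨#A, #B, by rw [← card_product, ← hinter, h.card_interedges],
    card_union_of_disjoint hAB ▸ card_le_univ _,
    nonempty_iso_completeBipartiteGraph_sum_bot hAB hG⟩

end IsBipartiteWith

end SimpleGraph

open SimpleGraph Real

theorem degEntropy_eq_one_add_logb_sqrt_add {V : Type} [Fintype V] (G : SimpleGraph V)
    [DecidableRel G.Adj] (hG : 0 < #G.edgeFinset) :
    degEntropy G = 1 + logb 2 √(#G.edgeFinset : ℝ) +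
      (#G.edgeFinset * log #G.edgeFinset - ∑ v, (G.degree v : ℝ) * log (G.degree v)) /
        (2 * #G.edgeFinset * log 2) := by
  have hm : (0 : ℝ) < #G.edgeFinset := by exact_mod_cast hG
  have hE : G.edgeSet.ncard = #G.edgeFinset := by rw [← coe_edgeFinset, Set.ncard_coe_finset]
  have hlog2 : 0 < log 2 := log_pos one_lt_two
  simp only [degEntropy, hE, ncard_neighborSet_eq_degree, logb, log_mul two_ne_zero hm.ne',
    log_sqrt hm.le, mul_div_assoc', ← sum_div]
  field_simp
  ring

theorem bipartite_entropy_lower_bound_general {n m : ℕ} (hm1 : 1 ≤ m)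
    (G : SimpleGraph (Fin n)) (side : Fin n → Bool)
    (hbip : ∀ u v : Fin n, G.Adj u v → side u ≠ side v)
    (hGm : G.edgeSet.ncard = m) :
    1 + Real.logb 2 (Real.sqrt m) ≤ degEntropy G ∧
      (degEntropy G = 1 + Real.logb 2 (Real.sqrt m) ↔
        ∃ q b : ℕ, 0 < q ∧ 0 < b ∧ q * b = m ∧ q + b ≤ n ∧
          Nonempty (G ≃g (completeBipartiteGraph (Fin q) (Fin b) ⊕g
            (⊥ : SimpleGraph (Fin (n - q - b)))))) := by
  classical
  have hE : #G.edgeFinset = m := by rw [← hGm, ← coe_edgeFinset, Set.ncard_coe_finset]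
  have hG := (Coloring.mk side fun h => hbip _ _ h).isBipartiteWith
  have hpos : (0 : ℝ) < 2 * m * log 2 := by positivity
  rw [degEntropy_eq_one_add_logb_sqrt_add G (hE ▸ hm1), hE]
  have hle := hG.sum_degree_mul_log_degree_le
  rw [hE] at hle
  refine ⟨le_add_of_nonneg_right (div_nonneg (sub_nonneg.2 hle) hpos.le), ?_⟩
  rw [add_eq_left, div_eq_zero_iff, or_iff_left hpos.ne', sub_eq_zero]
  constructor
  · intro heq
    obtain ⟨q, b, hqb, hqbn, hiso⟩ := hG.exists_iso_completeBipartiteGraph_sum_bot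
      fun v hv w hw => hG.adj_of_sum_degree_mul_log_degree_eq (by rw [hE]; exact heq.symm) hv hw
    rw [hE] at hqb
    refine ⟨q, b, Nat.pos_of_ne_zero ?_, Nat.pos_of_ne_zero ?_, hqb, by simpa using hqbn,
      by rwa [Fintype.card_fin] at hiso⟩ <;> rintro rfl <;> omega
  · rintro ⟨q, b, -, -, hqb, -, ⟨φ⟩⟩
    rw [sum_degree_mul_log_degree_of_iso_completeBipartiteGraph_sum_bot φ]
    simp [hqb]

/-- lower bound `1 + log₂ √m` for the degree-based entropy of
`(n,m)`-bipartite graphs, with equality iff `G ≅ K_{q,b} ∪ \overline{K}_{n-q-b}`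
for some `q, b` with `qb = m`, `q + b ≤ n`. -/
theorem bipartite_entropy_lower_bound {n m : ℕ} (hn : 2 ≤ n) (hm1 : 1 ≤ m)
    (hm2 : m ≤ (n + 1) / 2 * (n / 2))
    (G : SimpleGraph (Fin n)) (side : Fin n → Bool)
    (hbip : ∀ u v : Fin n, G.Adj u v → side u ≠ side v)
    (hGm : G.edgeSet.ncard = m) :
    1 + Real.logb 2 (Real.sqrt m) ≤ degEntropy G ∧
      (degEntropy G = 1 + Real.logb 2 (Real.sqrt m) ↔
        ∃ q b : ℕ, 0 < q ∧ 0 < b ∧ q * b = m ∧ q + b ≤ n ∧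
          Nonempty (G ≃g (completeBipartiteGraph (Fin q) (Fin b) ⊕g
            (⊥ : SimpleGraph (Fin (n - q - b)))))) :=
  bipartite_entropy_lower_bound_general hm1 G side hbip hGm
end

section
/- A graph G is a threshold graph (i.e., there exist vertex weights w_1,...,w_n ≥ 0 and a threshold t such that two distinct vertices v_i, v_j are adjacent iff w_i + w_j > t) if and only if there are no four distinct vertices u, v, w, x with uv, wx ∈ E(G) and uw, vx ∉ E(G). -/
open Finset

private def NoA {V : Type} (G : SimpleGraph V) : Prop :=
  ¬ ∃ u v w x : V, u ≠ v ∧ u ≠ w ∧ u ≠ x ∧ v ≠ w ∧ v ≠ x ∧ w ≠ x ∧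
      G.Adj u v ∧ G.Adj w x ∧ ¬ G.Adj u w ∧ ¬ G.Adj v x

/-- `Cov G a b` : every neighbor of `a` (other than `b`) is a neighbor of `b`. -/
private def Cov {V : Type} (G : SimpleGraph V) (a b : V) : Prop :=
  ∀ c, G.Adj a c → c ≠ b → G.Adj b c

private lemma cov_total {V : Type} {G : SimpleGraph V} (hG : NoA G) (a b : V) :
    Cov G a b ∨ Cov G b a := by
  by_contra hc
  push_neg at hc
  obtain ⟨h1, h2⟩ := hc
  simp only [Cov, not_forall] at h1 h2
  obtain ⟨c, hac, hcb, hnbc⟩ := h1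
  obtain ⟨d, hbd, hda, hnad⟩ := h2
  apply hG
  refine ⟨a, c, d, b, hac.ne, Ne.symm hda, ?_, ?_, hcb, hbd.ne', hac,
    hbd.symm, hnad, fun h => hnbc h.symm⟩
  · rintro rfl; exact hnbc hac
  · rintro rfl; exact hnad hac

private lemma cov_strict {V : Type} [Fintype V] [DecidableEq V] {G : SimpleGraph V}
    [DecidableRel G.Adj]
    {a b c : V} (hba : Cov G b a) (hac : G.Adj a c) (hcb : c ≠ b) (hnbc : ¬ G.Adj b c) :
    G.degree b < G.degree a := by
  have hca : c ∈ G.neighborFinset a := by rwa [SimpleGraph.mem_neighborFinset]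
  have hdega : G.degree a = (G.neighborFinset a).card := rfl
  have hdegb : G.degree b = (G.neighborFinset b).card := rfl
  by_cases hab : G.Adj a b
  · have hsub : G.neighborFinset b ⊆ insert a (((G.neighborFinset a).erase c).erase b) := by
      intro u hu
      rw [SimpleGraph.mem_neighborFinset] at hu
      rcases eq_or_ne u a with rfl | hua
      · exact Finset.mem_insert_self _ _
      · apply Finset.mem_insert_of_mem
        rw [Finset.mem_erase, Finset.mem_erase, SimpleGraph.mem_neighborFinset]
        refine ⟨hu.ne', ?_, hba u hu hua⟩
        rintro rfl; exact hnbc hu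
    have hbmem : b ∈ (G.neighborFinset a).erase c :=
      Finset.mem_erase.2 ⟨hcb.symm, by rwa [SimpleGraph.mem_neighborFinset]⟩
    have h1 : ((G.neighborFinset a).erase c).card = (G.neighborFinset a).card - 1 :=
      Finset.card_erase_of_mem hca
    have h2 : (((G.neighborFinset a).erase c).erase b).card
        = (G.neighborFinset a).card - 1 - 1 := by
      rw [Finset.card_erase_of_mem hbmem, h1]
    have h3 := Finset.card_le_card hsub
    have h4 := Finset.card_insert_le a (((G.neighborFinset a).erase c).erase b)
    have h5 : 2 ≤ (G.neighborFinset a).card := by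
      have hsub2 : ({c, b} : Finset V) ⊆ G.neighborFinset a := by
        intro u hu
        rw [Finset.mem_insert, Finset.mem_singleton] at hu
        rcases hu with rfl | rfl
        · exact hca
        · rwa [SimpleGraph.mem_neighborFinset]
      calc 2 = ({c, b} : Finset V).card := (Finset.card_pair hcb).symm
        _ ≤ _ := Finset.card_le_card hsub2
    omega
  · have hsub : G.neighborFinset b ⊆ (G.neighborFinset a).erase c := by
      intro u hu
      rw [SimpleGraph.mem_neighborFinset] at hu
      have hua : u ≠ a := by rintro rfl; exact hab hu.symm
      rw [Finset.mem_erase, SimpleGraph.mem_neighborFinset]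
      refine ⟨?_, hba u hu hua⟩
      rintro rfl; exact hnbc hu
    have h3 := Finset.card_le_card hsub
    rw [Finset.card_erase_of_mem hca] at h3
    have h5 : 1 ≤ (G.neighborFinset a).card := Finset.card_pos.2 ⟨c, hca⟩
    omega

private lemma deg_le_cov {V : Type} [Fintype V] [DecidableEq V] {G : SimpleGraph V}
    [DecidableRel G.Adj]
    (hG : NoA G) {a b : V} (h : G.degree a ≤ G.degree b) : Cov G a b := by
  rcases cov_total hG a b with h1 | h1
  · exact h1
  · intro c hac hcb
    by_contra hnbc
    exact absurd h (not_le.2 (cov_strict h1 hac hcb hnbc))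

/-- Extension step: given a dominating-or-isolated vertex `v0` and a normalized threshold
representation of the rest, build one for `G`. -/
private lemma step_lemma {V : Type} [Fintype V] [DecidableEq V] (G : SimpleGraph V) (v0 : V)
    (hcase : (∀ u, u ≠ v0 → G.Adj v0 u) ∨ (∀ u, ¬ G.Adj v0 u))
    (w' : {u : V // u ≠ v0} → ℝ) (t' : ℝ)
    (h0 : ∀ v, 0 ≤ w' v) (h1 : ∀ v, w' v ≤ t') (h2 : 0 ≤ t')
    (h3 : ∀ u v : {u : V // u ≠ v0}, u ≠ v → (G.Adj u.val v.val ↔ t' < w' u + w' v)) :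
    ∃ (w : V → ℝ) (t : ℝ), (∀ v, 0 ≤ w v) ∧ (∀ v, w v ≤ t) ∧ 0 ≤ t ∧
      ∀ u v : V, u ≠ v → (G.Adj u v ↔ t < w u + w v) := by
  rcases hcase with hdom | hiso
  · refine ⟨fun v => (if h : v = v0 then t' + 1 else w' ⟨v, h⟩) + 1, t' + 2, ?_, ?_,
      by linarith, ?_⟩
    · intro v
      by_cases h : v = v0
      · simp only [dif_pos h]; linarith
      · simp only [dif_neg h]; have := h0 ⟨v, h⟩; linarith
    · intro v
      by_cases h : v = v0
      · simp only [dif_pos h]; linarith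
      · simp only [dif_neg h]; have := h1 ⟨v, h⟩; linarith
    · intro u v huv
      by_cases hu : u = v0
      · have hv : v ≠ v0 := fun e => huv (hu.trans e.symm)
        simp only [dif_pos hu, dif_neg hv]
        have := h0 ⟨v, hv⟩
        exact iff_of_true (by rw [hu]; exact hdom v hv) (by linarith)
      · by_cases hv : v = v0
        · simp only [dif_pos hv, dif_neg hu]
          have := h0 ⟨u, hu⟩
          exact iff_of_true (by rw [hv]; exact (hdom u hu).symm) (by linarith)
        · simp only [dif_neg hu, dif_neg hv]
          have hne : (⟨u, hu⟩ : {x : V // x ≠ v0}) ≠ ⟨v, hv⟩ := by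
            intro e; exact huv (congrArg Subtype.val e)
          rw [h3 ⟨u, hu⟩ ⟨v, hv⟩ hne]
          constructor <;> intro <;> linarith
  · refine ⟨fun v => if h : v = v0 then 0 else w' ⟨v, h⟩, t', ?_, ?_, h2, ?_⟩
    · intro v
      by_cases h : v = v0
      · simp only [dif_pos h]; exact le_refl 0
      · simp only [dif_neg h]; exact h0 ⟨v, h⟩
    · intro v
      by_cases h : v = v0
      · simp only [dif_pos h]; exact h2
      · simp only [dif_neg h]; exact h1 ⟨v, h⟩
    · intro u v huv
      by_cases hu : u = v0
      · have hv : v ≠ v0 := fun e => huv (hu.trans e.symm)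
        simp only [dif_pos hu, dif_neg hv]
        have := h1 ⟨v, hv⟩
        exact iff_of_false (by rw [hu]; exact hiso v) (by linarith)
      · by_cases hv : v = v0
        · simp only [dif_pos hv, dif_neg hu]
          have := h1 ⟨u, hu⟩
          exact iff_of_false (by rw [hv]; exact fun h => hiso u h.symm) (by linarith)
        · simp only [dif_neg hu, dif_neg hv]
          have hne : (⟨u, hu⟩ : {x : V // x ≠ v0}) ≠ ⟨v, hv⟩ := by
            intro e; exact huv (congrArg Subtype.val e)
          exact h3 ⟨u, hu⟩ ⟨v, hv⟩ hne

private lemma aux (n : ℕ) : ∀ (V : Type) (_ : Fintype V) (G : SimpleGraph V),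
    Fintype.card V = n → NoA G →
    ∃ (w : V → ℝ) (t : ℝ), (∀ v, 0 ≤ w v) ∧ (∀ v, w v ≤ t) ∧ 0 ≤ t ∧
      ∀ u v : V, u ≠ v → (G.Adj u v ↔ t < w u + w v) := by
  induction n using Nat.strong_induction_on with
  | _ n ih =>
    intro V _ G hcard hG
    haveI : DecidableEq V := Classical.decEq V
    haveI : DecidableRel G.Adj := Classical.decRel _
    by_cases hne : Nonempty V
    · haveI : Nonempty V := hne
      obtain ⟨z, -, hz⟩ := Finset.exists_min_image (univ : Finset V) (fun v => G.degree v)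
        Finset.univ_nonempty
      -- find a dominating or isolated vertex v0
      have key : ∃ v0 : V, (∀ u, u ≠ v0 → G.Adj v0 u) ∨ (∀ u, ¬ G.Adj v0 u) := by
        by_cases hza : ∃ a, G.Adj z a
        · obtain ⟨a, hza⟩ := hza
          refine ⟨a, Or.inl fun u hu => ?_⟩
          rcases eq_or_ne u z with rfl | huz
          · exact hza.symm
          · have hcov : Cov G z u := deg_le_cov hG (hz u (mem_univ u))
            exact (hcov a hza (Ne.symm hu)).symm
        · push_neg at hza
          exact ⟨z, Or.inr hza⟩
      obtain ⟨v0, hcase⟩ := key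
      -- induced graph on the complement of v0
      have hlt : Fintype.card {u : V // u ≠ v0} < n := by
        rw [← hcard]
        exact Fintype.card_subtype_lt (x := v0) (by simp)
      have hG' : NoA (SimpleGraph.comap (Subtype.val : {u : V // u ≠ v0} → V) G) := by
        rintro ⟨u, v, w, x, huv, huw, hux, hvw, hvx, hwx, a1, a2, a3, a4⟩
        exact hG ⟨u.val, v.val, w.val, x.val,
          fun e => huv (Subtype.ext e), fun e => huw (Subtype.ext e),
          fun e => hux (Subtype.ext e), fun e => hvw (Subtype.ext e),
          fun e => hvx (Subtype.ext e), fun e => hwx (Subtype.ext e), a1, a2, a3, a4⟩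
      obtain ⟨w', t', h0, h1, h2, h3⟩ := ih _ hlt {u : V // u ≠ v0} _
        (SimpleGraph.comap (Subtype.val : {u : V // u ≠ v0} → V) G) rfl hG'
      exact step_lemma G v0 hcase w' t' h0 h1 h2 (fun u v huv => h3 u v huv)
    · refine ⟨fun _ => 0, 0, ?_, ?_, le_refl 0, ?_⟩ <;>
        intro v <;> exact absurd ⟨v⟩ hne

/-- Chvátal–Hammer: `G` admits nonnegative vertex weights and a threshold
`t` with `u ~ v ↔ w u + w v > t` (for distinct `u, v`) iff `G` has no four distinct
vertices `u v w x` with `uv, wx ∈ E` and `uw, vx ∉ E`. -/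
theorem threshold_iff_no_alternating_four {V : Type} [Fintype V] (G : SimpleGraph V) :
    (∃ (w : V → ℝ) (t : ℝ), (∀ v, 0 ≤ w v) ∧
        ∀ u v : V, u ≠ v → (G.Adj u v ↔ t < w u + w v)) ↔
      ¬ ∃ u v w x : V, u ≠ v ∧ u ≠ w ∧ u ≠ x ∧ v ≠ w ∧ v ≠ x ∧ w ≠ x ∧
          G.Adj u v ∧ G.Adj w x ∧ ¬ G.Adj u w ∧ ¬ G.Adj v x := by
  constructor
  · rintro ⟨w, t, hw, hadj⟩ ⟨u, v, x, y, huv, hux, huy, hvx, hvy, hxy, a1, a2, a3, a4⟩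
    have e1 : t < w u + w v := (hadj u v huv).mp a1
    have e2 : t < w x + w y := (hadj x y hxy).mp a2
    have e3 : ¬ t < w u + w x := fun h => a3 ((hadj u x hux).mpr h)
    have e4 : ¬ t < w v + w y := fun h => a4 ((hadj v y hvy).mpr h)
    rw [not_lt] at e3 e4
    linarith
  · intro h
    obtain ⟨w, t, h0, _, _, h3⟩ := aux (Fintype.card V) V ‹_› G rfl h
    exact ⟨w, t, h0, h3⟩
end

section
/- A graph G satisfying the threshold condition (no four distinct vertices u, v, w, x with uv, wx ∈ E and uw, vx ∉ E) is a split graph: its vertex set can be partitioned into a clique K and an independent set S, and moreover the neighborhoods of the vertices of S are nested (for any two vertices of S, the neighborhood of one is contained in the neighborhood of the other). -/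
/-- a graph with no alternating four vertices (`uv, wx ∈ E`, `uw, vx ∉ E`)
is a split graph with nested neighborhoods on the independent side. -/
theorem threshold_split_nested {V : Type} [Fintype V] (G : SimpleGraph V)
    (h : ¬ ∃ u v w x : V, u ≠ v ∧ u ≠ w ∧ u ≠ x ∧ v ≠ w ∧ v ≠ x ∧ w ≠ x ∧
      G.Adj u v ∧ G.Adj w x ∧ ¬ G.Adj u w ∧ ¬ G.Adj v x) :
    ∃ K S : Set V, K ∪ S = Set.univ ∧ Disjoint K S ∧ G.IsClique K ∧
      (∀ u ∈ S, ∀ v ∈ S, ¬ G.Adj u v) ∧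
      (∀ u ∈ S, ∀ v ∈ S, G.neighborSet u ⊆ G.neighborSet v ∨
        G.neighborSet v ⊆ G.neighborSet u) := by
  classical
  -- take a clique of maximum cardinality
  obtain ⟨s, hs, hmax⟩ : ∃ s : Finset V, G.IsClique (↑s : Set V) ∧
      ∀ t : Finset V, G.IsClique (↑t : Set V) → t.card ≤ s.card := by
    obtain ⟨s, hsmem, hmax⟩ := Finset.exists_max_image
      (Finset.univ.filter fun t : Finset V => G.IsClique (↑t : Set V)) Finset.card
      ⟨∅, by simp⟩
    exact ⟨s, (Finset.mem_filter.1 hsmem).2, fun t ht =>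
      hmax t (Finset.mem_filter.2 ⟨Finset.mem_univ _, ht⟩)⟩
  -- the complement of a maximum clique is independent
  have hind : ∀ a b : V, a ∉ s → b ∉ s → ¬ G.Adj a b := by
    intro a b hans hbns hab
    have hne : a ≠ b := hab.ne
    -- every vertex outside s has a non-neighbor in s
    have key : ∀ c : V, c ∉ s → ∃ x ∈ s, ¬ G.Adj c x := by
      intro c hcns
      by_contra hx
      push_neg at hx
      have hcl : G.IsClique (insert c (↑s : Set V)) :=
        hs.insert fun y hy _ => hx y hy
      have hle := hmax (insert c s) (by
        have : ((insert c s : Finset V) : Set V) = insert c (↑s : Set V) := by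
          simp
        rw [this]; exact hcl)
      rw [Finset.card_insert_of_notMem hcns] at hle
      omega
    obtain ⟨x, hxs, hax⟩ := key a hans
    obtain ⟨y, hys, hby⟩ := key b hbns
    by_cases hcase : ∃ p ∈ s, ∃ q ∈ s, ¬ G.Adj a p ∧ ¬ G.Adj b q ∧ p ≠ q
    · obtain ⟨p, hps, q, hqs, hap, hbq, hpq⟩ := hcase
      have hane : a ≠ p := fun e => hans (e ▸ hps)
      have haq : a ≠ q := fun e => hans (e ▸ hqs)
      have hbp : b ≠ p := fun e => hbns (e ▸ hps)
      have hbqne : b ≠ q := fun e => hbns (e ▸ hqs)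
      exact h ⟨a, b, p, q, hne, hane, haq, hbp, hbqne, hpq, hab,
        hs hps hqs hpq, hap, hbq⟩
    · push_neg at hcase
      -- then x = y and a, b are adjacent to everything in s except x
      have hxy : x = y := hcase x hxs y hys hax hby
      subst hxy
      have hadjall : ∀ p ∈ s, p ≠ x → G.Adj a p ∧ G.Adj b p := by
        intro p hps hpx
        constructor
        · by_contra hap
          exact hpx (hcase p hps x hxs hap hby)
        · by_contra hbp
          exact (hpx (hcase x hxs p hps hax hbp).symm)
      -- build a bigger clique
      have hclique : G.IsClique (insert a (insert b ((s.erase x : Finset V) : Set V))) := by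
        have h1 : G.IsClique ((s.erase x : Finset V) : Set V) :=
          hs.subset (by simp [Finset.coe_erase, Set.diff_subset])
        have h2 : G.IsClique (insert b ((s.erase x : Finset V) : Set V)) := by
          refine h1.insert fun y hy _ => ?_
          rw [Finset.mem_coe, Finset.mem_erase] at hy
          exact (hadjall y hy.2 hy.1).2
        refine h2.insert fun y hy hya => ?_
        rcases hy with rfl | hy
        · exact hab
        · rw [Finset.mem_coe, Finset.mem_erase] at hy
          exact (hadjall y hy.2 hy.1).1
      have hbni : b ∉ s.erase x := fun hb => hbns (Finset.mem_of_mem_erase hb)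
      have hani : a ∉ insert b (s.erase x) := by
        simp only [Finset.mem_insert]
        rintro (rfl | ha)
        · exact hne rfl
        · exact hans (Finset.mem_of_mem_erase ha)
      have hle := hmax (insert a (insert b (s.erase x))) (by
        have : ((insert a (insert b (s.erase x)) : Finset V) : Set V) =
            insert a (insert b ((s.erase x : Finset V) : Set V)) := by simp
        rw [this]; exact hclique)
      rw [Finset.card_insert_of_notMem hani,
        Finset.card_insert_of_notMem hbni,
        Finset.card_erase_of_mem hxs] at hle
      have hpos : 1 ≤ s.card := Finset.card_pos.2 ⟨x, hxs⟩
      omega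
  refine ⟨(↑s : Set V), (↑s : Set V)ᶜ, by simp, disjoint_compl_right, hs, ?_, ?_⟩
  · intro a ha b hb
    exact hind a b ha hb
  · intro u hu v hv
    by_cases huv : u = v
    · subst huv; exact Or.inl (subset_refl _)
    by_contra hcon
    push_neg at hcon
    obtain ⟨hns1, hns2⟩ := hcon
    obtain ⟨w, hw, hwv⟩ := Set.not_subset.1 hns1
    obtain ⟨x, hx, hxu⟩ := Set.not_subset.1 hns2
    rw [SimpleGraph.mem_neighborSet] at hw hx
    rw [SimpleGraph.mem_neighborSet] at hwv hxu
    have huvadj : ¬ G.Adj u v := hind u v hu hv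
    have huw : u ≠ w := hw.ne
    have hux : u ≠ x := fun e => huvadj (e ▸ hx).symm
    have hvw : v ≠ w := fun e => huvadj (e ▸ hw)
    have hvx : v ≠ x := hx.ne
    have hwx : w ≠ x := fun e => hwv (e ▸ hx)
    exact h ⟨u, w, x, v, huw, hux, huv, hwx, Ne.symm hvw, Ne.symm hvx,
      hw, hx.symm, hxu, fun hadj => hwv hadj.symm⟩
end

section
/- Let G be a bipartite graph with bipartition (X, Y) such that there are no x_1, x_2 ∈ X and y_1, y_2 ∈ Y with x_1y_1, x_2y_2 ∈ E(G) and x_1y_2, x_2y_1 ∉ E(G). Then every induced subgraph of G without isolated vertices has on each side of the bipartition a dominating vertex, i.e., a vertex adjacent to all vertices on the other side of the bipartition (of that induced subgraph). -/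
lemma dom_side {V : Type} [Fintype V] (G : SimpleGraph V) (side : V → Bool)
    (hbip : ∀ u v : V, G.Adj u v → side u ≠ side v)
    (htot : ∀ x₁ x₂ : V, side x₁ = true → side x₂ = true →
      (∀ y, G.Adj x₂ y → G.Adj x₁ y) ∨ (∀ y, G.Adj x₁ y → G.Adj x₂ y))
    (S : Set V) (hne : S.Nonempty) (hni : ∀ v ∈ S, ∃ u ∈ S, G.Adj v u) :
    ∃ x ∈ S, side x = true ∧ ∀ y ∈ S, side y = false → G.Adj x y := by
  classical
  set C : Finset V := Finset.univ.filter (fun x => x ∈ S ∧ side x = true) with hC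
  have hCne : C.Nonempty := by
    obtain ⟨v, hv⟩ := hne
    obtain ⟨u, hu, hadj⟩ := hni v hv
    have hne' := hbip v u hadj
    cases hv' : side v with
    | true => exact ⟨v, by simp [hC, hv, hv']⟩
    | false =>
      have hu' : side u = true := by
        cases hsu : side u with
        | false => exact absurd (hv'.trans hsu.symm) hne'
        | true => rfl
      exact ⟨u, by simp [hC, hu, hu']⟩
  set N : V → Finset V := fun x => Finset.univ.filter (fun y => y ∈ S ∧ G.Adj x y) with hN
  obtain ⟨x, hxC, hxmax⟩ := C.exists_max_image (fun x => (N x).card) hCne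
  have hxS : x ∈ S := by simp [hC] at hxC; exact hxC.1
  have hxside : side x = true := by simp [hC] at hxC; exact hxC.2
  refine ⟨x, hxS, hxside, ?_⟩
  intro y hyS hyside
  obtain ⟨u, huS, hadj⟩ := hni y hyS
  have huside : side u = true := by
    have := hbip y u hadj
    cases hsu : side u with
    | false => exact absurd (hyside.trans hsu.symm) this
    | true => rfl
  rcases htot x u hxside huside with h | h
  · exact h y hadj.symm
  · -- N x ⊆ N u, and maximality gives equality
    have hsub : N x ⊆ N u := by
      intro z hz
      simp [hN] at hz ⊢
      exact ⟨hz.1, h z hz.2⟩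
    have huC : u ∈ C := by simp [hC, huS, huside]
    have hcard : (N u).card ≤ (N x).card := hxmax u huC
    have heq : N x = N u := Finset.eq_of_subset_of_card_le hsub hcard
    have hyNu : y ∈ N u := by simp [hN, hyS, hadj.symm]
    rw [← heq] at hyNu
    simp [hN] at hyNu
    exact hyNu.2

/-- in a difference graph (bipartition given by `side`, no alternating
configuration), every nonempty induced subgraph without isolated vertices has a
dominating vertex on each side of the bipartition. -/
theorem difference_graph_domination {V : Type} [Fintype V] (G : SimpleGraph V)
    (side : V → Bool) (hbip : ∀ u v : V, G.Adj u v → side u ≠ side v)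
    (hdiff : ¬ ∃ x₁ x₂ y₁ y₂ : V, side x₁ = true ∧ side x₂ = true ∧
      side y₁ = false ∧ side y₂ = false ∧
      G.Adj x₁ y₁ ∧ G.Adj x₂ y₂ ∧ ¬ G.Adj x₁ y₂ ∧ ¬ G.Adj x₂ y₁) :
    ∀ S : Set V, S.Nonempty → (∀ v ∈ S, ∃ u ∈ S, G.Adj v u) →
      (∃ x ∈ S, side x = true ∧ ∀ y ∈ S, side y = false → G.Adj x y) ∧
      (∃ y ∈ S, side y = false ∧ ∀ x ∈ S, side x = true → G.Adj y x) := by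
  intro S hne hni
  have sidefalse : ∀ {a b : V}, G.Adj a b → side a = true → side b = false := by
    intro a b hab ha
    have := hbip a b hab
    cases hb : side b with
    | false => rfl
    | true => exact absurd (ha.trans hb.symm) this
  constructor
  · refine dom_side G side hbip ?_ S hne hni
    intro x₁ x₂ h₁ h₂
    by_contra hcon
    push_neg at hcon
    obtain ⟨⟨y₂, hy₂a, hy₂n⟩, ⟨y₁, hy₁a, hy₁n⟩⟩ := hcon
    exact hdiff ⟨x₁, x₂, y₁, y₂, h₁, h₂, sidefalse hy₁a h₁, sidefalse hy₂a h₂,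
      hy₁a, hy₂a, hy₂n, hy₁n⟩
  · have h := dom_side G (fun v => !side v) (fun u v hadj => by
        simp only [ne_eq, Bool.not_inj_iff]; exact hbip u v hadj) ?_ S hne hni
    · obtain ⟨y, hyS, hyside, hdom⟩ := h
      simp only [Bool.not_eq_true'] at hyside
      refine ⟨y, hyS, hyside, fun x hxS hxside => ?_⟩
      exact hdom x hxS (by simp [hxside])
    · intro x₁ x₂ h₁ h₂
      simp only [Bool.not_eq_true'] at h₁ h₂
      by_contra hcon
      push_neg at hcon
      obtain ⟨⟨y₂, hy₂a, hy₂n⟩, ⟨y₁, hy₁a, hy₁n⟩⟩ := hcon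
      have s₁ : side y₁ = true := by
        have := hbip x₁ y₁ hy₁a
        cases hb : side y₁ with
        | false => exact absurd (h₁.trans hb.symm) this
        | true => rfl
      have s₂ : side y₂ = true := by
        have := hbip x₂ y₂ hy₂a
        cases hb : side y₂ with
        | false => exact absurd (h₂.trans hb.symm) this
        | true => rfl
      exact hdiff ⟨y₁, y₂, x₁, x₂, s₁, s₂, h₁, h₂, hy₁a.symm, hy₂a.symm,
        fun h => hy₁n h.symm, fun h => hy₂n h.symm⟩
end

section
/- A pair of non-negative, non-increasing integer sequences D(X) = [d_1,...,d_{|X|}] and D(Y) = [e_1,...,e_{|Y|}] with e_1 ≤ |X| is the pair of degree sequences of the two sides of a difference graph with bipartition (X, Y) if and only if D(X) equals the conjugate sequence of D(Y). -/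
/-!
In a difference graph the neighbourhoods of the vertices of `X` form a chain under inclusion, so
once `X` is listed by non-increasing degree, the neighbourhood of each `y ∈ Y` is an initial
segment of `X`, namely the first `deg y` vertices. Hence `x_i ~ y_j ↔ i < e_j`, and the degree of
`x_i` is `#{j | i < e_j}`, the `i`-th term of the conjugate of `e`. Conversely the relation
`i < e_j` defines a difference graph, whose degree sequences are `e` (as `e_j ≤ |X|`) and its
conjugate.
-/

namespace SimpleGraph

variable {α β : Type*}

def ofBipartiteRel (r : α → β → Prop) : SimpleGraph (α ⊕ β) where
  Adj
    | .inl a, .inr b => r a b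
    | .inr b, .inl a => r a b
    | _, _ => False
  symm := ⟨by rintro (a | b) (a' | b') h <;> exact h⟩
  loopless := ⟨by rintro (a | b) h <;> exact h⟩

variable (G : SimpleGraph (α ⊕ β))

theorem ncard_neighborSet_inl (h : ∀ a a' : α, ¬ G.Adj (.inl a) (.inl a')) (a : α) :
    (G.neighborSet (.inl a)).ncard = {b | G.Adj (.inl a) (.inr b)}.ncard := by
  have : G.neighborSet (.inl a) = Sum.inr '' {b | G.Adj (.inl a) (.inr b)} := by
    ext (a' | b)
    · simp [h a a']
    · simp
  rw [this, Set.ncard_image_of_injective _ Sum.inr_injective]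

theorem ncard_neighborSet_inr (h : ∀ b b' : β, ¬ G.Adj (.inr b) (.inr b')) (b : β) :
    (G.neighborSet (.inr b)).ncard = {a | G.Adj (.inl a) (.inr b)}.ncard := by
  have : G.neighborSet (.inr b) = Sum.inl '' {a | G.Adj (.inl a) (.inr b)} := by
    ext (a | b')
    · simp [adj_comm]
    · simp [h b b']
  rw [this, Set.ncard_image_of_injective _ Sum.inl_injective]

end SimpleGraph

section Ferrers

variable {α β : Type*} {r : α → β → Prop}

theorem setOf_rel_subset_or_superset
    (hr : ¬ ∃ a₁ a₂ b₁ b₂, r a₁ b₁ ∧ r a₂ b₂ ∧ ¬ r a₁ b₂ ∧ ¬ r a₂ b₁) (a₁ a₂ : α) :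
    {b | r a₁ b} ⊆ {b | r a₂ b} ∨ {b | r a₂ b} ⊆ {b | r a₁ b} := by
  by_contra! h
  obtain ⟨b₁, h₁, h₁'⟩ := Set.not_subset.1 h.1
  obtain ⟨b₂, h₂, h₂'⟩ := Set.not_subset.1 h.2
  exact hr ⟨a₁, a₂, b₁, b₂, h₁, h₂, h₂', h₁'⟩

/-- Comparable neighbourhoods of equal size coincide. -/
theorem antitone_setOf_rel [Preorder α] [Finite β]
    (hr : ¬ ∃ a₁ a₂ b₁ b₂, r a₁ b₁ ∧ r a₂ b₂ ∧ ¬ r a₁ b₂ ∧ ¬ r a₂ b₁)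
    (hanti : Antitone fun a => {b | r a b}.ncard) : Antitone fun a => {b | r a b} := by
  intro a' a hle
  refine (setOf_rel_subset_or_superset hr a a').elim id fun hsub => ?_
  exact (Set.eq_of_subset_of_ncard_le hsub (hanti hle) (Set.toFinite _)).symm.subset

end Ferrers

namespace Fin

theorem ncard_setOf_val_lt {n m : ℕ} (hm : m ≤ n) : {i : Fin n | (i : ℕ) < m}.ncard = m := by
  simp [Set.ncard_eq_toFinset_card', card_filter_val_lt, hm]

theorem mem_iff_val_lt_ncard_of_isLowerSet {n : ℕ} {s : Set (Fin n)} (hs : IsLowerSet s)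
    (i : Fin n) : i ∈ s ↔ (i : ℕ) < s.ncard := by
  obtain rfl | ⟨a, rfl⟩ := hs.eq_univ_or_Iio
  · simp
  · have : Set.Iio a = {i : Fin n | (i : ℕ) < a} := rfl
    rw [this, ncard_setOf_val_lt a.is_lt.le]
    rfl

theorem rel_iff_val_lt_ncard_setOf {β : Type*} [Finite β] {p : ℕ} {r : Fin p → β → Prop}
    (hr : ¬ ∃ a₁ a₂ b₁ b₂, r a₁ b₁ ∧ r a₂ b₂ ∧ ¬ r a₁ b₂ ∧ ¬ r a₂ b₁)
    (hanti : Antitone fun a => {b | r a b}.ncard) (a : Fin p) (b : β) :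
    r a b ↔ (a : ℕ) < {a | r a b}.ncard :=
  mem_iff_val_lt_ncard_of_isLowerSet (fun _ _ hle ha => antitone_setOf_rel hr hanti hle ha) a

end Fin

theorem difference_graph_degree_sequences_general (p s : ℕ) (d : Fin p → ℕ) (e : Fin s → ℕ)
    (hd : ∀ i j : Fin p, i ≤ j → d j ≤ d i)
    (he1 : ∀ j : Fin s, e j ≤ p) :
    (∃ G : SimpleGraph (Fin p ⊕ Fin s),
        (∀ i j : Fin p, ¬ G.Adj (.inl i) (.inl j)) ∧
        (∀ i j : Fin s, ¬ G.Adj (.inr i) (.inr j)) ∧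
        (¬ ∃ (x₁ x₂ : Fin p) (y₁ y₂ : Fin s),
          G.Adj (.inl x₁) (.inr y₁) ∧ G.Adj (.inl x₂) (.inr y₂) ∧
          ¬ G.Adj (.inl x₁) (.inr y₂) ∧ ¬ G.Adj (.inl x₂) (.inr y₁)) ∧
        (∀ i : Fin p, (G.neighborSet (.inl i)).ncard = d i) ∧
        (∀ j : Fin s, (G.neighborSet (.inr j)).ncard = e j)) ↔
      ∀ i : Fin p, d i = (Finset.univ.filter fun j : Fin s => (i : ℕ) + 1 ≤ e j).card := by
  constructor
  · rintro ⟨G, hXX, hYY, hcross, hdeg_inl, hdeg_inr⟩ i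
    have hrow (a : Fin p) : {b | G.Adj (.inl a) (.inr b)}.ncard = d a :=
      (G.ncard_neighborSet_inl hXX a).symm.trans (hdeg_inl a)
    have hadj (a : Fin p) (b : Fin s) : G.Adj (.inl a) (.inr b) ↔ (a : ℕ) < e b := by
      rw [← hdeg_inr b, G.ncard_neighborSet_inr hYY b]
      exact Fin.rel_iff_val_lt_ncard_setOf hcross
        (fun a a' hle => by simpa only [hrow] using hd a a' hle) a b
    rw [← hrow i]
    simp [hadj, Set.ncard_eq_toFinset_card']
  · intro hconj
    refine ⟨SimpleGraph.ofBipartiteRel fun i j => (i : ℕ) < e j, fun _ _ => id, fun _ _ => id,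
      ?_, fun i => ?_, fun j => ?_⟩
    · rintro ⟨x₁, x₂, y₁, y₂, h₁, h₂, h₃, h₄⟩
      simp only [SimpleGraph.ofBipartiteRel] at h₁ h₂ h₃ h₄
      omega
    · rw [SimpleGraph.ncard_neighborSet_inl _ (fun _ _ => id), hconj i]
      simp [SimpleGraph.ofBipartiteRel, Set.ncard_eq_toFinset_card']
    · rw [SimpleGraph.ncard_neighborSet_inr _ (fun _ _ => id)]
      exact Fin.ncard_setOf_val_lt (he1 j)

/-- Mahadev–Peled: a pair of non-negative non-increasing integer sequences
`d` on `X` and `e` on `Y` with `e ≤ |X|` is the pair of side degree sequences of a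
difference graph with bipartition `(X,Y)` iff `d` is the conjugate of `e`. -/
theorem difference_graph_degree_sequences (p s : ℕ) (d : Fin p → ℕ) (e : Fin s → ℕ)
    (hd : ∀ i j : Fin p, i ≤ j → d j ≤ d i) (he : ∀ i j : Fin s, i ≤ j → e j ≤ e i)
    (he1 : ∀ j : Fin s, e j ≤ p) :
    (∃ G : SimpleGraph (Fin p ⊕ Fin s),
        (∀ i j : Fin p, ¬ G.Adj (.inl i) (.inl j)) ∧
        (∀ i j : Fin s, ¬ G.Adj (.inr i) (.inr j)) ∧
        (¬ ∃ (x₁ x₂ : Fin p) (y₁ y₂ : Fin s),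
          G.Adj (.inl x₁) (.inr y₁) ∧ G.Adj (.inl x₂) (.inr y₂) ∧
          ¬ G.Adj (.inl x₁) (.inr y₂) ∧ ¬ G.Adj (.inl x₂) (.inr y₁)) ∧
        (∀ i : Fin p, (G.neighborSet (.inl i)).ncard = d i) ∧
        (∀ j : Fin s, (G.neighborSet (.inr j)).ncard = e j)) ↔
      ∀ i : Fin p, d i = (Finset.univ.filter fun j : Fin s => (i : ℕ) + 1 ≤ e j).card :=
  difference_graph_degree_sequences_general p s d e hd he1
end

section
/- If a graph G on n vertices with m ≥ 1 edges minimizes the degree-based entropy among all graphs with n vertices and m edges, and its vertex set is partitioned into a clique K and an independent set S with the neighborhoods of vertices of S nested, then one may assume K is a maximum clique: if K is not maximum, then at most one vertex of S lies in a maximum clique, and moving that vertex from S to K yields a clique–independent-set partition where the clique is maximum. -/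
open Finset

/-- for a minimizer `G` of the degree-based entropy with a split partition
`(K,S)` with nested neighborhoods of `S`: any maximum clique contains at most one vertex
of `S`, and there is a split partition whose clique part is a maximum clique. -/
theorem may_assume_maximum_clique {n m : ℕ} (hm : 1 ≤ m) (G : SimpleGraph (Fin n))
    (hGm : G.edgeSet.ncard = m)
    (hmin : ∀ H : SimpleGraph (Fin n), H.edgeSet.ncard = m → degEntropy G ≤ degEntropy H)
    (K S : Set (Fin n)) (hcover : K ∪ S = Set.univ) (hdisj : Disjoint K S)
    (hK : G.IsClique K) (hS : ∀ u ∈ S, ∀ v ∈ S, ¬ G.Adj u v)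
    (hnested : ∀ u ∈ S, ∀ v ∈ S, G.neighborSet u ⊆ G.neighborSet v ∨
      G.neighborSet v ⊆ G.neighborSet u) :
    (∀ C : Set (Fin n), G.IsClique C →
      (∀ C' : Set (Fin n), G.IsClique C' → C'.ncard ≤ C.ncard) → (C ∩ S).ncard ≤ 1) ∧
    ∃ K' S' : Set (Fin n), K' ∪ S' = Set.univ ∧ Disjoint K' S' ∧ G.IsClique K' ∧
      (∀ u ∈ S', ∀ v ∈ S', ¬ G.Adj u v) ∧
      (∀ C : Set (Fin n), G.IsClique C → C.ncard ≤ K'.ncard) := by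
  have hfin : ∀ s : Set (Fin n), s.Finite := fun s => s.toFinite
  -- any clique meets S in at most one vertex
  have hsub : ∀ C : Set (Fin n), G.IsClique C → (C ∩ S).ncard ≤ 1 := by
    intro C hC
    rw [Set.ncard_le_one (hfin _)]
    rintro a ⟨haC, haS⟩ b ⟨hbC, hbS⟩
    by_contra hne
    exact hS a haS b hbS (hC haC hbC hne)
  refine ⟨fun C hC _ => hsub C hC, ?_⟩
  by_cases h : ∃ x ∈ S, ∀ k ∈ K, G.Adj x k
  · -- some vertex of S is adjacent to all of K : move it into K
    obtain ⟨x, hxS, hx⟩ := h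
    have hxK : x ∉ K := fun hk => Set.disjoint_left.mp hdisj hk hxS
    refine ⟨insert x K, S \ {x}, ?_, ?_, ?_, ?_, ?_⟩
    · apply Set.eq_univ_of_forall
      intro v
      rcases (hcover ▸ Set.mem_univ v : v ∈ K ∪ S) with hv | hv
      · exact Or.inl (Set.mem_insert_of_mem _ hv)
      · by_cases hvx : v = x
        · exact Or.inl (hvx ▸ Set.mem_insert _ _)
        · exact Or.inr ⟨hv, hvx⟩
    · rw [Set.disjoint_left]
      rintro a (rfl | haK) ⟨haS, hax⟩
      · exact hax rfl
      · exact Set.disjoint_left.mp hdisj haK haS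
    · exact hK.insert (fun b hb _ => hx b hb)
    · exact fun u hu v hv => hS u hu.1 v hv.1
    · intro C hC
      have hsplit : C = (C ∩ K) ∪ (C ∩ S) := by
        rw [← Set.inter_union_distrib_left, hcover, Set.inter_univ]
      calc C.ncard = ((C ∩ K) ∪ (C ∩ S)).ncard := by rw [← hsplit]
        _ ≤ (C ∩ K).ncard + (C ∩ S).ncard := Set.ncard_union_le _ _
        _ ≤ K.ncard + 1 :=
            Nat.add_le_add (Set.ncard_le_ncard Set.inter_subset_right (hfin _)) (hsub C hC)
        _ = (insert x K).ncard := (Set.ncard_insert_of_notMem hxK (hfin _)).symm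
  · -- every vertex of S misses some vertex of K : K is already maximum
    push_neg at h
    refine ⟨K, S, hcover, hdisj, hK, hS, ?_⟩
    intro C hC
    by_cases hCS : ∃ x, x ∈ C ∩ S
    · obtain ⟨x, hxC, hxS⟩ := hCS
      obtain ⟨k, hkK, hxk⟩ := h x hxS
      have hkC : k ∉ C := fun hkC =>
        hxk (hC hxC hkC (fun heq => Set.disjoint_left.mp hdisj (heq ▸ hkK) hxS))
      have hsub2 : C \ {x} ⊆ K \ {k} := by
        rintro y ⟨hyC, hyx⟩
        have hyx' : y ≠ x := fun e => hyx (Set.mem_singleton_iff.mpr e)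
        refine ⟨?_, fun hyk => ?_⟩
        · rcases (hcover ▸ Set.mem_univ y : y ∈ K ∪ S) with hy | hy
          · exact hy
          · exact absurd (hC hyC hxC hyx') (hS y hy x hxS)
        · rw [Set.mem_singleton_iff] at hyk
          subst hyk
          exact hxk (hC hxC hyC (Ne.symm hyx'))
      calc C.ncard = (C \ {x}).ncard + 1 := (Set.ncard_diff_singleton_add_one hxC (hfin _)).symm
        _ ≤ (K \ {k}).ncard + 1 := Nat.add_le_add_right (Set.ncard_le_ncard hsub2 (hfin _)) 1
        _ = K.ncard := Set.ncard_diff_singleton_add_one hkK (hfin _)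
    · push_neg at hCS
      apply Set.ncard_le_ncard _ (hfin _)
      intro y hyC
      rcases (hcover ▸ Set.mem_univ y : y ∈ K ∪ S) with hy | hy
      · exact hy
      · exact absurd ⟨hyC, hy⟩ (hCS y)
end
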